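/- arXiv:2512.20750 — 8 statements merged into one kernel-verified Lean document; each statement's English description precedes it below -/
import Mathlib

section
/- Let H be a real Hilbert space, D ⊆ H a symmetric dictionary, b ∈ (0,1], and τ = {t_k}_{k=1}^∞ a nonincreasing sequence with t_k ∈ (0,1] for all k. Let f ∈ A₁(D) and let (f_m, φ_m) be any realization of the Weak Greedy Algorithm WGA(τ,b) applied to f. Then for every m ≥ 1, ‖f_m‖ ≤ (1 + b(2−b)·Σ_{k=1}^m t_k²)^{−(2−b)t_m / (2(2+(2−b)t_m))}. -/
open scoped RealInnerProductSpace

/-- `A₁(D)`: the closure of the convex hull of the (symmetric) dictionary `D`. -/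
noncomputable def A1 {H : Type*} [NormedAddCommGroup H] [InnerProductSpace ℝ H]
    (D : Set H) : Set H :=
  closure (convexHull ℝ D)

private lemma bern {ρ y : ℝ} (hρ : 0 < ρ) (hy : 0 ≤ y) :
    1 + y * (1 - ρ) ≤ ρ ^ (-y) := by
  rw [Real.rpow_def_of_pos hρ]
  calc 1 + y * (1 - ρ) ≤ Real.exp (y * (1 - ρ)) := by
        linarith [Real.add_one_le_exp (y * (1 - ρ))]
    _ ≤ Real.exp (Real.log ρ * -y) := by
        apply Real.exp_le_exp.2
        have h := Real.log_le_sub_one_of_pos hρ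
        nlinarith

set_option maxHeartbeats 2000000 in
private lemma wga_core (b : ℝ) (hb : b ∈ Set.Ioc (0:ℝ) 1)
    (τ : ℕ → ℝ) (hτ : ∀ k ≥ 1, τ k ∈ Set.Ioc (0:ℝ) 1)
    (hτmono : ∀ k ≥ 1, τ (k + 1) ≤ τ k)
    (a c : ℕ → ℝ) (ha0 : a 0 ≤ 1) (hann : ∀ n, 0 ≤ a n) (hc : ∀ n, 0 ≤ c n)
    (harec : ∀ n, a (n+1) = a n - b*(2-b) * (c n)^2)
    (hkey : ∀ n, τ (n+1) * a n ≤ c n * (1 + b * ∑ j ∈ Finset.range n, c j))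
    (m : ℕ) (hm : 1 ≤ m) :
    a m ≤ (1 + b*(2-b) * ∑ k ∈ Finset.Icc 1 m, (τ k)^2)
      ^ (-((2-b)*τ m / (2 + (2-b)*τ m))) := by
  obtain ⟨hb0, hb1⟩ := hb
  have hτm0 : 0 < τ m := (hτ m hm).1
  have hτm1 : τ m ≤ 1 := (hτ m hm).2
  set θ := b*(2-b) with hθdef
  set x := (2-b)*τ m with hxdef
  set β := 1 + 2/x with hβdef
  set B : ℕ → ℝ := fun n => 1 + b * ∑ j ∈ Finset.range n, c j with hBdef
  have hθ0 : 0 < θ := by rw [hθdef]; nlinarith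
  have hx0 : 0 < x := by rw [hxdef]; nlinarith
  have h1x : 0 < 1/x := div_pos one_pos hx0
  have hβ1 : 1 ≤ β := by rw [hβdef]; nlinarith [div_pos two_pos hx0]
  have hβ0 : 0 < β := lt_of_lt_of_le one_pos hβ1
  have hτge : ∀ k, 1 ≤ k → k ≤ m → τ m ≤ τ k := by
    have key : ∀ i, 1 ≤ i → ∀ d, τ (i + d) ≤ τ i := by
      intro i hi d
      induction d with
      | zero => simp
      | succ d ih =>
        have h2 := hτmono (i + d) (le_trans hi (Nat.le_add_right i d))
        have h3 : i + (d + 1) = (i + d) + 1 := by omega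
        rw [h3]
        exact le_trans h2 ih
    intro k hk hkm
    obtain ⟨d, rfl⟩ := Nat.exists_eq_add_of_le hkm
    exact key k hk d
  have hBpos : ∀ n, 1 ≤ B n := by
    intro n
    have : 0 ≤ ∑ j ∈ Finset.range n, c j := Finset.sum_nonneg fun j _ => hc j
    have hBn : B n = 1 + b * ∑ j ∈ Finset.range n, c j := rfl
    nlinarith
  have hBsucc : ∀ n, B (n+1) = B n + b * c n := by
    intro n
    have h1 : B (n+1) = 1 + b * ∑ j ∈ Finset.range (n+1), c j := rfl
    have h2 : B n = 1 + b * ∑ j ∈ Finset.range n, c j := rfl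
    rw [h1, h2, Finset.sum_range_succ]; ring
  have hadec : ∀ n, a (n+1) ≤ a n := by
    intro n
    have := harec n
    nlinarith [sq_nonneg (c n)]
  have haanti : ∀ i j : ℕ, i ≤ j → a j ≤ a i := by
    have key : ∀ i d, a (i + d) ≤ a i := by
      intro i d
      induction d with
      | zero => simp
      | succ d ih =>
        have h3 : i + (d + 1) = (i + d) + 1 := by omega
        rw [h3]
        exact le_trans (hadec (i + d)) ih
    intro i j hij
    obtain ⟨d, rfl⟩ := Nat.exists_eq_add_of_le hij
    exact key i d
  have hsumτ : 0 ≤ ∑ k ∈ Finset.Icc 1 m, (τ k)^2 :=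
    Finset.sum_nonneg fun k _ => sq_nonneg _
  have hApos : (0:ℝ) < 1 + θ * ∑ k ∈ Finset.Icc 1 m, (τ k)^2 := by nlinarith
  rcases le_or_gt (a m) 0 with ham | ham
  · exact ham.trans (Real.rpow_pos_of_pos hApos _).le
  have hposk : ∀ k, k ≤ m → 0 < a k := fun k hk => lt_of_lt_of_le ham (haanti k m hk)
  -- Step 1: B n ≤ a n ^ (-(1/x)) for n < m
  have hB : ∀ n, n < m → B n ≤ a n ^ (-(1/x)) := by
    intro n
    induction n with
    | zero =>
      intro _
      have h0 : 0 < a 0 := hposk 0 (Nat.zero_le m)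
      have h1 : (1:ℝ) ≤ a 0 ^ (-(1/x)) :=
        Real.one_le_rpow_of_pos_of_le_one_of_nonpos h0 ha0 (neg_nonpos.mpr h1x.le)
      have hB0 : B 0 = 1 := by
        have : B 0 = 1 + b * ∑ j ∈ Finset.range 0, c j := rfl
        simp [this]
      rw [hB0]; exact h1
    | succ n ih =>
      intro hn1
      have hn : n < m := Nat.lt_of_succ_lt hn1
      have ihn := ih hn
      have han : 0 < a n := hposk n hn.le
      have han1 : 0 < a (n+1) := hposk (n+1) hn1.le
      have hτn : τ m ≤ τ (n+1) := hτge (n+1) (Nat.succ_le_succ (Nat.zero_le n)) hn1.le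
      have hΔ : a n - a (n+1) = θ * (c n)^2 := by rw [harec n]; ring
      have hΔ0 : 0 ≤ a n - a (n+1) := by linarith [hadec n]
      have hBn1 : 0 < B n := lt_of_lt_of_le one_pos (hBpos n)
      have e0 : 0 ≤ θ * c n * a n :=
        mul_nonneg (mul_nonneg hθ0.le (hc n)) han.le
      have e1 : θ * c n * (τ (n+1) * a n) ≤ θ * c n * (c n * B n) :=
        mul_le_mul_of_nonneg_left (hkey n) (mul_nonneg hθ0.le (hc n))
      have e3 : θ * c n * a n * τ m ≤ θ * c n * a n * τ (n+1) :=
        mul_le_mul_of_nonneg_left hτn e0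
      have e2 : b * c n * (x * a n) ≤ (a n - a (n+1)) * B n := by
        rw [hΔ, hxdef, hθdef]
        rw [hθdef] at e1 e3
        nlinarith [e1, e3]
      have hxa : 0 < x * a n := mul_pos hx0 han
      have step2 : b * c n ≤ (a n - a (n+1))/(x * a n) * B n := by
        rw [div_mul_eq_mul_div, le_div_iff₀ hxa]
        linarith
      have hfac : (0:ℝ) ≤ 1 + (a n - a (n+1))/(x * a n) := by
        have := div_nonneg hΔ0 hxa.le
        linarith
      have step3 : B (n+1) ≤ a n ^ (-(1/x)) * (1 + (a n - a (n+1))/(x * a n)) := by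
        rw [hBsucc n]
        calc B n + b * c n ≤ B n + (a n - a (n+1))/(x * a n) * B n := by linarith
          _ = B n * (1 + (a n - a (n+1))/(x * a n)) := by ring
          _ ≤ a n ^ (-(1/x)) * (1 + (a n - a (n+1))/(x * a n)) :=
              mul_le_mul_of_nonneg_right ihn hfac
      set ρ := a (n+1) / a n with hρdef
      have hρpos : 0 < ρ := div_pos han1 han
      have hρ1 : ρ ≤ 1 := by rw [hρdef, div_le_one han]; exact hadec n
      have hrw : 1 + (a n - a (n+1))/(x * a n) = 1 + (1/x) * (1 - ρ) := by
        rw [hρdef]; field_simp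
      have hbern : 1 + (1/x) * (1 - ρ) ≤ ρ ^ (-(1/x)) := bern hρpos h1x.le
      have hmul : a n ^ (-(1/x)) * ρ ^ (-(1/x)) = a (n+1) ^ (-(1/x)) := by
        rw [← Real.mul_rpow han.le hρpos.le, hρdef, mul_div_cancel₀ _ (ne_of_gt han)]
      calc B (n+1) ≤ a n ^ (-(1/x)) * (1 + (a n - a (n+1))/(x * a n)) := step3
        _ = a n ^ (-(1/x)) * (1 + (1/x) * (1 - ρ)) := by rw [hrw]
        _ ≤ a n ^ (-(1/x)) * ρ ^ (-(1/x)) :=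
            mul_le_mul_of_nonneg_left hbern (Real.rpow_nonneg han.le _)
        _ = a (n+1) ^ (-(1/x)) := hmul
  -- Step 2: decay recursion
  have hQ : ∀ n, n < m → a n ^ (-β) + β * θ * (τ (n+1))^2 ≤ a (n+1) ^ (-β) := by
    intro n hn
    have han : 0 < a n := hposk n hn.le
    have han1 : 0 < a (n+1) := hposk (n+1) hn
    have hτn1 : 0 < τ (n+1) := (hτ (n+1) (Nat.succ_le_succ (Nat.zero_le n))).1
    have hBn1 : 0 < B n := lt_of_lt_of_le one_pos (hBpos n)
    have hBsqpos : (0:ℝ) < (B n)^2 := pow_pos hBn1 2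
    have ihB := hB n hn
    set u := θ * (τ (n+1))^2 * a n / (B n)^2 with hudef
    have hu0 : 0 ≤ u := by
      rw [hudef]
      exact div_nonneg (mul_nonneg (mul_nonneg hθ0.le (sq_nonneg _)) han.le) (sq_nonneg _)
    have hsq : (τ (n+1) * a n)^2 ≤ (c n * B n)^2 :=
      pow_le_pow_left₀ (mul_nonneg hτn1.le han.le) (hkey n) 2
    have hstep : a (n+1) ≤ a n * (1 - u) := by
      have hBne : (B n) ≠ 0 := ne_of_gt hBn1
      have heq : a n * (1 - u) = a n - θ * (τ (n+1))^2 * (a n)^2 / (B n)^2 := by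
        rw [hudef]; field_simp
      have hdiv : θ * (τ (n+1))^2 * (a n)^2 / (B n)^2 ≤ θ * (c n)^2 := by
        rw [div_le_iff₀ hBsqpos]
        nlinarith [mul_le_mul_of_nonneg_left hsq hθ0.le]
      rw [heq, harec n]
      linarith
    have h1u : 0 < 1 - u := by nlinarith
    have hr1 : (a n * (1 - u)) ^ (-β) ≤ a (n+1) ^ (-β) :=
      Real.rpow_le_rpow_of_nonpos han1 hstep (by linarith)
    have hr2 : (a n * (1 - u)) ^ (-β) = a n ^ (-β) * (1 - u) ^ (-β) :=
      Real.mul_rpow han.le h1u.le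
    have hr3 : 1 + β * u ≤ (1 - u) ^ (-β) := by
      have h := bern h1u (le_trans zero_le_one hβ1)
      calc 1 + β * u = 1 + β * (1 - (1 - u)) := by ring
        _ ≤ (1 - u) ^ (-β) := h
    have hr4 : a n ^ (-β) * (1 + β * u) ≤ (a n * (1 - u)) ^ (-β) := by
      rw [hr2]
      exact mul_le_mul_of_nonneg_left hr3 (Real.rpow_nonneg han.le _)
    have hBsq : (B n)^2 ≤ a n ^ (1 - β) := by
      have h2 : (B n)^2 ≤ (a n ^ (-(1/x)))^2 :=
        pow_le_pow_left₀ (by linarith [hBpos n]) ihB 2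
      have h3 : (a n ^ (-(1/x)))^2 = a n ^ (1 - β) := by
        rw [pow_two, ← Real.rpow_add han]
        congr 1
        rw [hβdef]
        ring
      rw [← h3]; exact h2
    have hexp : a n * a n ^ (-β) = a n ^ (1 - β) := by
      rw [sub_eq_add_neg, Real.rpow_add han, Real.rpow_one]
    have hua : θ * (τ (n+1))^2 ≤ u * a n ^ (-β) := by
      have h4 : u * a n ^ (-β) = θ * (τ (n+1))^2 * (a n ^ (1 - β) / (B n)^2) := by
        rw [hudef, ← hexp]; ring
      have h5 : 1 ≤ a n ^ (1 - β) / (B n)^2 := by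
        rw [le_div_iff₀ hBsqpos]; linarith
      have h6 : 0 ≤ θ * (τ (n+1))^2 := mul_nonneg hθ0.le (sq_nonneg _)
      have h7 := mul_le_mul_of_nonneg_left h5 h6
      rw [h4]; linarith
    have h8 := mul_le_mul_of_nonneg_left hua hβ0.le
    calc a n ^ (-β) + β * θ * (τ (n+1))^2
        ≤ a n ^ (-β) + β * (u * a n ^ (-β)) := by nlinarith
      _ = a n ^ (-β) * (1 + β * u) := by ring
      _ ≤ (a n * (1 - u)) ^ (-β) := hr4
      _ ≤ a (n+1) ^ (-β) := hr1
  -- Step 3: telescoping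
  have hT : ∀ n, n ≤ m → a 0 ^ (-β) + β * θ * ∑ j ∈ Finset.range n, (τ (j+1))^2
      ≤ a n ^ (-β) := by
    intro n
    induction n with
    | zero => intro _; simp
    | succ n ih =>
      intro hn1
      have hn : n < m := hn1
      have hq := hQ n hn
      have ihn := ih hn.le
      rw [Finset.sum_range_succ]
      nlinarith
  have hsum_eq : ∑ j ∈ Finset.range m, (τ (j+1))^2 = ∑ k ∈ Finset.Icc 1 m, (τ k)^2 := by
    rw [← Finset.Ico_add_one_right_eq_Icc, Finset.sum_Ico_eq_sum_range]
    simp [add_comm]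
  have hfin := hT m le_rfl
  have ha0pow : (1:ℝ) ≤ a 0 ^ (-β) :=
    Real.one_le_rpow_of_pos_of_le_one_of_nonpos (hposk 0 (Nat.zero_le m)) ha0 (by linarith)
  have hA_le : 1 + θ * ∑ k ∈ Finset.Icc 1 m, (τ k)^2 ≤ a m ^ (-β) := by
    rw [← hsum_eq]
    have hs : 0 ≤ ∑ j ∈ Finset.range m, (τ (j+1))^2 :=
      Finset.sum_nonneg fun j _ => sq_nonneg _
    nlinarith [mul_nonneg (mul_nonneg (sub_nonneg.mpr hβ1) hθ0.le) hs]
  have hexp_eq : -(x / (2 + x)) = -(1/β) := by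
    rw [hβdef]
    have h2x : (0:ℝ) < 2 + x := by linarith
    field_simp
    ring
  have hβne : β ≠ 0 := ne_of_gt hβ0
  have h3 : (a m ^ (-β)) ^ (-(1/β)) = a m := by
    rw [← Real.rpow_mul ham.le]
    have : -β * -(1/β) = 1 := by field_simp
    rw [this, Real.rpow_one]
  have h2 : (a m ^ (-β)) ^ (-(1/β)) ≤
      (1 + θ * ∑ k ∈ Finset.Icc 1 m, (τ k)^2) ^ (-(1/β)) :=
    Real.rpow_le_rpow_of_nonpos hApos hA_le (neg_nonpos.mpr (by positivity))
  rw [hexp_eq]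
  rw [h3] at h2
  exact h2

open scoped RealInnerProductSpace


set_option maxHeartbeats 2000000 in
/-- Rate of convergence of the Weak Greedy Algorithm WGA(τ,b) on `A₁(D)`:
for `f ∈ A₁(D)` and any realization `(f_m, φ_m)` of WGA(τ,b) applied to `f`,
`‖f_m‖ ≤ (1 + b(2-b) Σ_{k=1}^m t_k²)^{-(2-b)t_m/(2(2+(2-b)t_m))}`. -/
theorem stmt_0 {H : Type*} [NormedAddCommGroup H] [InnerProductSpace ℝ H] [CompleteSpace H]
    (D : Set H)
    (hDnorm : ∀ g ∈ D, ‖g‖ = 1) (hDsymm : ∀ g ∈ D, -g ∈ D)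
    (hDspan : (Submodule.span ℝ D).topologicalClosure = ⊤)
    (b : ℝ) (hb : b ∈ Set.Ioc (0:ℝ) 1)
    (τ : ℕ → ℝ) (hτ : ∀ k ≥ 1, τ k ∈ Set.Ioc (0:ℝ) 1)
    (hτmono : ∀ k ≥ 1, τ (k + 1) ≤ τ k)
    (f : ℕ → H) (φ : ℕ → H)
    (hf0 : f 0 ∈ A1 D)
    (hφD : ∀ m : ℕ, φ (m + 1) ∈ D)
    (hgreedy : ∀ m : ℕ,
      ⟪f m, φ (m + 1)⟫ ≥ τ (m + 1) * sSup {r : ℝ | ∃ g ∈ D, r = ⟪f m, g⟫})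
    (hrec : ∀ m : ℕ, f (m + 1) = f m - (b * ⟪f m, φ (m + 1)⟫) • φ (m + 1)) :
    ∀ m : ℕ, 1 ≤ m →
      ‖f m‖ ≤ (1 + b * (2 - b) * ∑ k ∈ Finset.Icc 1 m, (τ k) ^ 2)
        ^ (-((2 - b) * τ m / (2 * (2 + (2 - b) * τ m)))) := by
  intro m hm
  obtain ⟨hb0, hb1⟩ := hb
  set a : ℕ → ℝ := fun n => ‖f n‖^2 with hadef
  set c : ℕ → ℝ := fun n => ⟪f n, φ (n+1)⟫ with hcdef
  set S : ℕ → ℝ := fun n => sSup {r : ℝ | ∃ g ∈ D, r = ⟪f n, g⟫} with hSdef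
  have hDne : D.Nonempty := by
    have h1 : (closure (convexHull ℝ D)).Nonempty := ⟨f 0, hf0⟩
    have h2 : (convexHull ℝ D).Nonempty := closure_nonempty_iff.mp h1
    exact convexHull_nonempty_iff.mp h2
  have hbdd : ∀ n, BddAbove {r : ℝ | ∃ g ∈ D, r = ⟪f n, g⟫} := by
    intro n
    refine ⟨‖f n‖, ?_⟩
    rintro r ⟨g, hg, rfl⟩
    calc ⟪f n, g⟫ ≤ ‖f n‖ * ‖g‖ := real_inner_le_norm _ _
      _ = ‖f n‖ := by rw [hDnorm g hg, mul_one]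
  have hle : ∀ n, ∀ g ∈ D, ⟪f n, g⟫ ≤ S n := fun n g hg =>
    le_csSup (hbdd n) ⟨g, hg, rfl⟩
  have hS0 : ∀ n, 0 ≤ S n := by
    obtain ⟨g0, hg0⟩ := hDne
    intro n
    rcases le_or_gt 0 ⟪f n, g0⟫ with h | h
    · exact le_trans h (hle n g0 hg0)
    · have h2 := hle n (-g0) (hDsymm g0 hg0)
      rw [inner_neg_right] at h2
      linarith
  have hhull : ∀ n, ⟪f n, f 0⟫ ≤ S n := by
    intro n
    have hsub : closure (convexHull ℝ D) ⊆ {y : H | ⟪f n, y⟫ ≤ S n} := by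
      apply closure_minimal
      · apply convexHull_min
        · intro g hg; exact hle n g hg
        · exact convex_halfSpace_le
            ⟨fun u v => inner_add_right _ _ _, fun r u => real_inner_smul_right _ _ _⟩ (S n)
      · exact isClosed_le (Continuous.inner continuous_const continuous_id) continuous_const
    exact hsub hf0
  have hf0norm : ‖f 0‖ ≤ 1 := by
    have hsub : closure (convexHull ℝ D) ⊆ Metric.closedBall (0:H) 1 := by
      apply closure_minimal
      · apply convexHull_min
        · intro g hg
          simp only [Metric.mem_closedBall, dist_zero_right]
          rw [hDnorm g hg]
        · exact convex_closedBall 0 1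
      · exact Metric.isClosed_closedBall
    have h2 := hsub hf0
    simpa [Metric.mem_closedBall, dist_zero_right] using h2
  have ha0 : a 0 ≤ 1 := by
    have h1 : a 0 = ‖f 0‖^2 := rfl
    rw [h1]
    nlinarith [norm_nonneg (f 0)]
  have hann : ∀ n, 0 ≤ a n := fun n => sq_nonneg ‖f n‖
  have hcS : ∀ n, τ (n+1) * S n ≤ c n := fun n => hgreedy n
  have hcnn : ∀ n, 0 ≤ c n := by
    intro n
    have h1 := hcS n
    have h2 : 0 ≤ τ (n+1) * S n :=
      mul_nonneg (hτ (n+1) (Nat.succ_le_succ (Nat.zero_le n))).1.le (hS0 n)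
    linarith
  have harec : ∀ n, a (n+1) = a n - b*(2-b) * (c n)^2 := by
    intro n
    have h1 : a (n+1) = ‖f (n+1)‖^2 := rfl
    have h2 : a n = ‖f n‖^2 := rfl
    have h3 : ⟪f n, φ (n+1)⟫ = c n := rfl
    rw [h1, h2, hrec n, norm_sub_sq_real, real_inner_smul_right, norm_smul,
      hDnorm _ (hφD n), h3, Real.norm_eq_abs, mul_one, sq_abs]
    ring
  have hsumf : ∀ n, f n = f 0 - ∑ j ∈ Finset.range n, (b * c j) • φ (j+1) := by
    intro n
    induction n with
    | zero => simp
    | succ n ih =>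
      have h3 : ⟪f n, φ (n+1)⟫ = c n := rfl
      rw [Finset.sum_range_succ, hrec n, h3, ih]
      abel
  have hkey : ∀ n, τ (n+1) * a n ≤ c n * (1 + b * ∑ j ∈ Finset.range n, c j) := by
    intro n
    have hBnn : (0:ℝ) ≤ 1 + b * ∑ j ∈ Finset.range n, c j := by
      have h0 : 0 ≤ ∑ j ∈ Finset.range n, c j := Finset.sum_nonneg fun j _ => hcnn j
      nlinarith
    have hτn1 : 0 < τ (n+1) := (hτ (n+1) (Nat.succ_le_succ (Nat.zero_le n))).1
    have hinner : a n = ⟪f n, f 0⟫ - ∑ j ∈ Finset.range n, (b * c j) * ⟪f n, φ (j+1)⟫ := by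
      have h2 : a n = ⟪f n, f n⟫ := (real_inner_self_eq_norm_sq (f n)).symm
      rw [h2]
      nth_rewrite 2 [hsumf n]
      rw [inner_sub_right, inner_sum]
      congr 1
      exact Finset.sum_congr rfl fun j _ => real_inner_smul_right _ _ _
    have hterm : ∀ j ∈ Finset.range n, -((b * c j) * ⟪f n, φ (j+1)⟫) ≤ (b * c j) * S n := by
      intro j _
      have h2 := hle n (-(φ (j+1))) (hDsymm _ (hφD j))
      rw [inner_neg_right] at h2
      have hbc : 0 ≤ b * c j := mul_nonneg hb0.le (hcnn j)
      nlinarith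
    have hsum2 : -(∑ j ∈ Finset.range n, (b * c j) * ⟪f n, φ (j+1)⟫)
        ≤ ∑ j ∈ Finset.range n, (b * c j) * S n := by
      rw [← Finset.sum_neg_distrib]
      exact Finset.sum_le_sum hterm
    have h4 : (b * ∑ j ∈ Finset.range n, c j) * S n
        = ∑ j ∈ Finset.range n, (b * c j) * S n := by
      rw [Finset.mul_sum, Finset.sum_mul]
    have han : a n ≤ S n * (1 + b * ∑ j ∈ Finset.range n, c j) := by
      have h1 := hhull n
      rw [hinner]
      nlinarith [hsum2]
    calc τ (n+1) * a n ≤ τ (n+1) * (S n * (1 + b * ∑ j ∈ Finset.range n, c j)) :=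
          mul_le_mul_of_nonneg_left han hτn1.le
      _ = (τ (n+1) * S n) * (1 + b * ∑ j ∈ Finset.range n, c j) := by ring
      _ ≤ c n * (1 + b * ∑ j ∈ Finset.range n, c j) :=
          mul_le_mul_of_nonneg_right (hcS n) hBnn
  have hmain := wga_core b ⟨hb0, hb1⟩ τ hτ hτmono a c ha0 hann hcnn harec hkey m hm
  set A := 1 + b*(2-b) * ∑ k ∈ Finset.Icc 1 m, (τ k)^2 with hAdef
  have hApos : 0 < A := by
    have h0 : 0 ≤ ∑ k ∈ Finset.Icc 1 m, (τ k)^2 := Finset.sum_nonneg fun k _ => sq_nonneg _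
    rw [hAdef]
    nlinarith [mul_nonneg (mul_nonneg hb0.le (by linarith : (0:ℝ) ≤ 2 - b)) h0]
  set e := -((2 - b) * τ m / (2 * (2 + (2 - b) * τ m))) with hedef
  have hRHSpos : 0 < A ^ e := Real.rpow_pos_of_pos hApos e
  have hsq : (A ^ e)^2 = A ^ (-((2-b)*τ m / (2 + (2-b)*τ m))) := by
    rw [pow_two, ← Real.rpow_add hApos]
    congr 1
    rw [hedef]
    have hτm0 : 0 < τ m := (hτ m hm).1
    have h2x : (0:ℝ) < 2 + (2-b)*τ m := by nlinarith
    field_simp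
    ring
  have hfm : ‖f m‖^2 ≤ (A ^ e)^2 := by
    rw [hsq]; exact hmain
  have hfin := Real.sqrt_le_sqrt hfm
  rwa [Real.sqrt_sq (norm_nonneg _), Real.sqrt_sq hRHSpos.le] at hfin
end

section
/- Let H be a real Hilbert space, D ⊆ H a symmetric dictionary, b ∈ (0,1], t ∈ (0,1], and take the constant weakness sequence t_k = t for all k. Take h ∈ (0,1) and set β := (1 − b/2)·h·t. Suppose ε ∈ (0,1], B > 0, and f, f^ε ∈ H satisfy ‖f − f^ε‖ ≤ ε and f^ε/B ∈ A₁(D). Let (f_m, φ_m) be any realization of the Weak Greedy Algorithm WGA(t,b) applied to f. Then for every m with 1 ≤ m ≤ ε^{−2}, ‖f_m‖ ≤ max( ε/(1−h), (B+1)·( b(2−b)·m·h²·t² )^{−β/(2(1+β))} ). -/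
open scoped RealInnerProductSpace

lemma gronwall_aux (α u : ℝ) (hα : 0 < α) (hu : 0 ≤ u) :
    (1 - α * u) * (1 + u) ^ α ≤ 1 := by
  rcases le_or_gt (1 - α * u) 0 with hneg | hpos
  · have : (0:ℝ) ≤ (1 + u) ^ α := Real.rpow_nonneg (by linarith) _
    nlinarith
  · have h1 : (1 + u) ^ α ≤ Real.exp (α * u) := by
      have h2 : (1 + u) ^ α ≤ (Real.exp u) ^ α :=
        Real.rpow_le_rpow (by linarith) (by linarith [Real.add_one_le_exp u]) hα.le
      have h3 : (Real.exp u) ^ α = Real.exp (α * u) := by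
        rw [Real.rpow_def_of_pos (Real.exp_pos u), Real.log_exp]; ring_nf
      linarith [h2, h3.le, h3.ge]
    have h4 : 1 - α * u ≤ Real.exp (-(α * u)) := by
      have := Real.add_one_le_exp (-(α * u)); linarith
    calc (1 - α * u) * (1 + u) ^ α ≤ Real.exp (-(α*u)) * Real.exp (α*u) := by
          apply mul_le_mul h4 h1 (Real.rpow_nonneg (by linarith) _) (Real.exp_pos _).le
      _ = 1 := by rw [← Real.exp_add]; simp

lemma aux_main (b t h B β : ℝ) (hb : 0 < b) (hb1 : b ≤ 1) (ht : 0 < t) (ht1 : t ≤ 1)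
    (hh : 0 < h) (hh1 : h < 1) (hB : 0 < B) (hβ : β = (1 - b / 2) * h * t)
    (m : ℕ) (hm : 1 ≤ m) (a y : ℕ → ℝ)
    (ha0 : a 0 ≤ (B + 1) ^ 2) (hapos : ∀ k, 0 ≤ a k) (hy : ∀ k, 0 ≤ y k)
    (hrec : ∀ k, k < m → a (k + 1) = a k - b * (2 - b) * y k ^ 2)
    (hkey : ∀ k, k < m → t * h * a k ≤ y k * (B + b * ∑ j ∈ Finset.range k, y j)) :
    a m ≤ (B + 1) ^ 2 * (b * (2 - b) * (m : ℝ) * h ^ 2 * t ^ 2) ^ (-(β / (1 + β))) := by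
  have hβpos : 0 < β := by
    rw [hβ]
    have h1 : (0:ℝ) < 1 - b/2 := by linarith
    positivity
  have h2β : 2 * β = (2 - b) * h * t := by rw [hβ]; ring
  set S : ℕ → ℝ := fun k => ∑ j ∈ Finset.range k, y j with hS
  set A : ℕ → ℝ := fun k => B + b * S k with hA
  have hSnn : ∀ k, 0 ≤ S k := fun k => Finset.sum_nonneg fun j _ => hy j
  have hApos : ∀ k, 0 < A k := fun k => by
    have := hSnn k
    show 0 < B + b * S k
    nlinarith
  have hAstep : ∀ k, A (k + 1) = A k + b * y k := by
    intro k
    show B + b * S (k+1) = B + b * S k + b * y k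
    simp only [hS, Finset.sum_range_succ]; ring
  have hmono : ∀ k, k < m → a (k + 1) ≤ a k := by
    intro k hk; rw [hrec k hk]
    have h2b : (0:ℝ) < 2 - b := by linarith
    have := mul_nonneg (mul_nonneg hb.le h2b.le) (sq_nonneg (y k))
    linarith
  have hmono' : ∀ p q : ℕ, p ≤ q → q ≤ m → a q ≤ a p := by
    intro p q hpq hqm
    induction q, hpq using Nat.le_induction with
    | base => exact le_refl _
    | succ q hq ih => exact le_trans (hmono q (by omega)) (ih (by omega))
  have claim1 : ∀ k, k ≤ m → a k * A k ^ (2 * β) ≤ a 0 * B ^ (2 * β) := by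
    intro k hk
    induction k with
    | zero =>
        have : A 0 = B := by show B + b * S 0 = B; simp [hS]
        rw [this]
    | succ k ih =>
        have hkm : k < m := by omega
        have ih' := ih (by omega)
        set u := b * y k / A k with hu
        have hupos : 0 ≤ u := by
          have h1 := (hApos k); have h2 := hy k; positivity
        have h1 : A (k + 1) = A k * (1 + u) := by
          rw [hAstep k, hu]; field_simp [(hApos k).ne']
        have h2 : A (k+1) ^ (2*β) = A k ^ (2*β) * (1+u) ^ (2*β) := by
          rw [h1, Real.mul_rpow (hApos k).le (by linarith)]
        have hy2 : t * h * a k * y k / A k ≤ y k ^ 2 := by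
          rw [div_le_iff₀ (hApos k)]
          have h6 := mul_le_mul_of_nonneg_right (hkey k hkm) (hy k)
          have hAeq : A k = B + b * ∑ j ∈ Finset.range k, y j := rfl
          rw [hAeq]
          nlinarith [h6]
        have h3 : a (k+1) ≤ a k * (1 - 2*β*u) := by
          rw [hrec k hkm]
          have e : 2*β*u*a k = b*(2-b) * (t*h*a k*y k/A k) := by
            rw [h2β, hu]; field_simp
          have hcy : 2*β*u*a k ≤ b*(2-b)*y k^2 := by
            rw [e]
            exact mul_le_mul_of_nonneg_left hy2 (by nlinarith)
          linarith [hcy]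
        calc a (k+1) * A (k+1) ^ (2*β)
            ≤ (a k * (1 - 2*β*u)) * A (k+1) ^ (2*β) :=
              mul_le_mul_of_nonneg_right h3 (Real.rpow_nonneg (hApos (k+1)).le _)
          _ = (a k * A k ^ (2*β)) * ((1 - 2*β*u) * (1+u)^(2*β)) := by rw [h2]; ring
          _ ≤ (a k * A k ^ (2*β)) * 1 := by
              apply mul_le_mul_of_nonneg_left (gronwall_aux (2*β) u (by linarith) hupos)
              exact mul_nonneg (hapos k) (Real.rpow_nonneg (hApos k).le _)
          _ = a k * A k ^ (2*β) := mul_one _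
          _ ≤ a 0 * B ^ (2*β) := ih'
  have claim3 : ∀ k, k ≤ m → B^2 + 2*b*(t*h)*(k:ℝ)*(a m) ≤ A k ^ 2 := by
    intro k hk
    induction k with
    | zero =>
        have : A 0 = B := by show B + b * S 0 = B; simp [hS]
        rw [this]; simp
    | succ k ih =>
        have hkm : k < m := by omega
        have ih' := ih (by omega)
        have hk1 : t * h * a k ≤ y k * (B + b * S k) := hkey k hkm
        have ham : a m ≤ a k := hmono' k m (by omega) (le_refl m)
        have he : A (k+1) ^ 2 = A k ^ 2 + 2*b*(y k * (B + b * S k)) + (b*y k)^2 := by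
          rw [hAstep k]; show _ = (B + b * S k)^2 + _ + _; ring
        rw [he]
        push_cast
        have h7 : t*h*a m ≤ t*h*a k := mul_le_mul_of_nonneg_left ham (by positivity)
        have h8 := mul_le_mul_of_nonneg_left (h7.trans hk1) (by positivity : (0:ℝ) ≤ 2*b)
        nlinarith [sq_nonneg (b * y k), h8]
  have hm1 : (1:ℝ) ≤ (m:ℝ) := by exact_mod_cast hm
  have hmpos : (0:ℝ) < (m:ℝ) := by linarith
  have h2b : (0:ℝ) < 2 - b := by linarith
  have hXpos : (0:ℝ) < b * (2 - b) * (m:ℝ) * h ^ 2 * t ^ 2 :=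
    mul_pos (mul_pos (mul_pos (mul_pos hb h2b) hmpos) (pow_pos hh 2)) (pow_pos ht 2)
  rcases (hapos m).eq_or_lt with hz | hz
  · rw [← hz]; positivity
  · set X := b * (2 - b) * (m:ℝ) * h ^ 2 * t ^ 2 with hX
    set W := 2*b*(t*h)*(m:ℝ) with hW
    have hWpos : 0 < W := by
      rw [hW]
      exact mul_pos (mul_pos (mul_pos two_pos hb) (mul_pos ht hh)) hmpos
    have hAm2 : W * a m ≤ A m ^ 2 := by
      rw [hW]
      have := claim3 m (le_refl m)
      linarith [sq_nonneg B]
    have hZpos : 0 < W * a m := mul_pos hWpos hz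
    have hAm2β : (W * a m) ^ β ≤ A m ^ (2*β) := by
      have e1 : A m ^ (2*β) = (A m ^ 2) ^ β := by
        rw [← Real.rpow_natCast (A m) 2, ← Real.rpow_mul (hApos m).le]
        norm_num
      rw [e1]
      exact Real.rpow_le_rpow hZpos.le hAm2 hβpos.le
    have hQ : (0:ℝ) < (B+1)^2 := by positivity
    have hstep : a m ^ (1+β) * W ^ β ≤ ((B+1)^2) ^ (1 + β) := by
      have hB2 : B ^ (2*β) ≤ (B+1) ^ (2*β) :=
        Real.rpow_le_rpow hB.le (by linarith) (by linarith)
      have e2 : ((B+1):ℝ)^2 * (B+1) ^ (2*β) = ((B+1)^2) ^ (1+β) := by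
        have hb1p : (0:ℝ) < B + 1 := by linarith
        rw [← Real.rpow_natCast (B+1) 2, ← Real.rpow_mul hb1p.le, ← Real.rpow_add hb1p]
        norm_num
        ring_nf
      have e3 : a m * (W * a m) ^ β = a m ^ (1+β) * W ^ β := by
        rw [Real.mul_rpow hWpos.le hz.le, Real.rpow_add hz, Real.rpow_one]
        ring
      calc a m ^ (1+β) * W ^ β = a m * (W * a m) ^ β := e3.symm
        _ ≤ a m * A m ^ (2*β) := mul_le_mul_of_nonneg_left hAm2β (hapos m)
        _ ≤ a 0 * B ^ (2*β) := claim1 m (le_refl m)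
        _ ≤ (B+1)^2 * (B+1) ^ (2*β) :=
            mul_le_mul ha0 hB2 (Real.rpow_nonneg hB.le _) hQ.le
        _ = ((B+1)^2) ^ (1+β) := e2
    set p := 1 + β with hp
    have hppos : (0:ℝ) < p := by rw [hp]; linarith
    set R := (B+1)^2 * W ^ (-(β/p)) with hR
    have hRpos : 0 < R := by
      rw [hR]; exact mul_pos hQ (Real.rpow_pos_of_pos hWpos _)
    have hRp : R ^ p = ((B+1)^2) ^ p * W ^ (-β) := by
      rw [hR, Real.mul_rpow hQ.le (Real.rpow_nonneg hWpos.le _),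
        ← Real.rpow_mul hWpos.le]
      congr 2
      field_simp
    have hamp : a m ^ p ≤ R ^ p := by
      rw [hRp]
      have : W ^ (-β) * W ^ β = 1 := by
        rw [← Real.rpow_add hWpos]; simp
      have h5 : a m ^ p * (W ^ β * W ^ (-β)) ≤ ((B+1)^2) ^ p * W ^ (-β) := by
        rw [← mul_assoc]
        exact mul_le_mul_of_nonneg_right hstep (Real.rpow_nonneg hWpos.le _)
      rw [mul_comm (W ^ β)] at h5
      rw [this] at h5
      simpa using h5
    have ham_le : a m ≤ R := by
      have e4 : (a m ^ p) ^ (1/p) = a m := by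
        rw [← Real.rpow_mul hz.le]
        rw [mul_one_div, div_self hppos.ne', Real.rpow_one]
      have e5 : (R ^ p) ^ (1/p) = R := by
        rw [← Real.rpow_mul hRpos.le]
        rw [mul_one_div, div_self hppos.ne', Real.rpow_one]
      calc a m = (a m ^ p) ^ (1/p) := e4.symm
        _ ≤ (R ^ p) ^ (1/p) :=
            Real.rpow_le_rpow (Real.rpow_nonneg hz.le _) hamp (by positivity)
        _ = R := e5
    have hXW : X ≤ W := by
      rw [hX, hW]
      have hht : h*t ≤ 1 := by
        calc h*t ≤ 1*1 := mul_le_mul hh1.le ht1 ht.le one_pos.le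
          _ = 1 := one_mul 1
      have h9 : (2-b)*(h*t) ≤ 2 := by
        calc (2-b)*(h*t) ≤ 2*1 := mul_le_mul (by linarith) hht (by positivity) two_pos.le
          _ = 2 := mul_one 2
      have hbm : (0:ℝ) ≤ b*(m:ℝ)*(h*t) := by positivity
      have h10 := mul_le_mul_of_nonneg_left h9 hbm
      calc b*(2-b)*(m:ℝ)*h^2*t^2 = b*(m:ℝ)*(h*t)*((2-b)*(h*t)) := by ring
        _ ≤ b*(m:ℝ)*(h*t)*2 := h10
        _ = 2*b*(t*h)*(m:ℝ) := by ring
    have hexp : -(β/p) ≤ 0 := by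
      rw [hp]
      have : 0 ≤ β/(1+β) := div_nonneg hβpos.le (by linarith)
      linarith
    have : W ^ (-(β/p)) ≤ X ^ (-(β/p)) :=
      Real.rpow_le_rpow_of_nonpos hXpos hXW hexp
    calc a m ≤ R := ham_le
      _ ≤ (B+1)^2 * X ^ (-(β/p)) := by
          rw [hR]; exact mul_le_mul_of_nonneg_left this hQ.le
      _ = (B+1)^2 * X ^ (-(β/(1+β))) := by rw [hp]




/-- Stability of the WGA(t,b) (constant weakness sequence) for noisy data:
if `‖f - f^ε‖ ≤ ε` and `f^ε/B ∈ A₁(D)`, then after `m ≤ ε⁻²` iterations of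
any realization of the WGA(t,b) applied to `f`,
`‖f_m‖ ≤ max( ε/(1-h), (B+1) (b(2-b) m h² t²)^{-β/(2(1+β))} )`,
with `β = (1-b/2) h t`. -/
theorem stmt_2 {H : Type*} [NormedAddCommGroup H] [InnerProductSpace ℝ H] [CompleteSpace H]
    (D : Set H)
    (hDnorm : ∀ g ∈ D, ‖g‖ = 1) (hDsymm : ∀ g ∈ D, -g ∈ D)
    (hDspan : (Submodule.span ℝ D).topologicalClosure = ⊤)
    (b : ℝ) (hb : b ∈ Set.Ioc (0:ℝ) 1)
    (t : ℝ) (ht : t ∈ Set.Ioc (0:ℝ) 1)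
    (h : ℝ) (hh : h ∈ Set.Ioo (0:ℝ) 1)
    (β : ℝ) (hβ : β = (1 - b / 2) * h * t)
    (ε : ℝ) (hε : ε ∈ Set.Ioc (0:ℝ) 1) (B : ℝ) (hB : 0 < B)
    (f₀ fε : H) (hnoise : ‖f₀ - fε‖ ≤ ε) (hfε : B⁻¹ • fε ∈ A1 D)
    (f : ℕ → H) (φ : ℕ → H)
    (hf0 : f 0 = f₀)
    (hφD : ∀ m : ℕ, φ (m + 1) ∈ D)
    (hgreedy : ∀ m : ℕ,
      ⟪f m, φ (m + 1)⟫ ≥ t * sSup {r : ℝ | ∃ g ∈ D, r = ⟪f m, g⟫})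
    (hrec : ∀ m : ℕ, f (m + 1) = f m - (b * ⟪f m, φ (m + 1)⟫) • φ (m + 1)) :
    ∀ m : ℕ, 1 ≤ m → (m : ℝ) ≤ ε⁻¹ ^ 2 →
      ‖f m‖ ≤ max (ε / (1 - h))
        ((B + 1) * (b * (2 - b) * (m : ℝ) * h ^ 2 * t ^ 2) ^ (-(β / (2 * (1 + β))))) := by
  intro m hm1 _
  obtain ⟨hb0, hb1⟩ := hb
  obtain ⟨ht0, ht1⟩ := ht
  obtain ⟨hh0, hh1⟩ := hh
  obtain ⟨hε0, hε1⟩ := hε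
  set a : ℕ → ℝ := fun k => ‖f k‖ ^ 2 with ha
  set y : ℕ → ℝ := fun k => ⟪f k, φ (k + 1)⟫ with hydef
  set μ : ℕ → ℝ := fun k => sSup {r : ℝ | ∃ g ∈ D, r = ⟪f k, g⟫} with hμ
  have hφ1 : φ 1 ∈ D := hφD 0
  have hbdd : ∀ k, BddAbove {r : ℝ | ∃ g ∈ D, r = ⟪f k, g⟫} := by
    intro k
    refine ⟨‖f k‖, ?_⟩
    rintro r ⟨g, hg, rfl⟩
    calc ⟪f k, g⟫ ≤ ‖f k‖ * ‖g‖ := real_inner_le_norm _ _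
      _ = ‖f k‖ := by rw [hDnorm g hg, mul_one]
  have hμle : ∀ k, ∀ g ∈ D, ⟪f k, g⟫ ≤ μ k := fun k g hg =>
    le_csSup (hbdd k) ⟨g, hg, rfl⟩
  have hμ0 : ∀ k, 0 ≤ μ k := by
    intro k
    have h1 := hμle k (φ 1) hφ1
    have h2 := hμle k (-(φ 1)) (hDsymm _ hφ1)
    rw [inner_neg_right] at h2
    linarith
  have hyμ : ∀ k, t * μ k ≤ y k := fun k => hgreedy k
  have hy0 : ∀ k, 0 ≤ y k := fun k =>
    le_trans (mul_nonneg ht0.le (hμ0 k)) (hyμ k)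
  have hanonneg : ∀ k, 0 ≤ a k := fun k => sq_nonneg _
  have hrecA : ∀ k, a (k + 1) = a k - b * (2 - b) * y k ^ 2 := by
    intro k
    show ‖f (k+1)‖ ^ 2 = ‖f k‖ ^ 2 - b * (2 - b) * (⟪f k, φ (k+1)⟫ : ℝ) ^ 2
    have e2 : ⟪f k, (b * ⟪f k, φ (k+1)⟫) • φ (k+1)⟫
        = (b * ⟪f k, φ (k+1)⟫) * ⟪f k, φ (k+1)⟫ := real_inner_smul_right _ _ _
    have e3 : ‖(b * ⟪f k, φ (k+1)⟫) • φ (k+1)‖ = |b * ⟪f k, φ (k+1)⟫| := by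
      rw [norm_smul, hDnorm _ (hφD k), mul_one, Real.norm_eq_abs]
    rw [hrec k, norm_sub_sq_real, e2, e3, sq_abs]
    ring
  have htel : ∀ k, f 0 - f k = ∑ j ∈ Finset.range k, (b * y j) • φ (j + 1) := by
    intro k
    induction k with
    | zero => simp
    | succ k ih =>
        rw [Finset.sum_range_succ, ← ih, hrec k]
        show f 0 - (f k - (b * y k) • φ (k+1)) = _
        abel
  have hmono : ∀ k, a (k + 1) ≤ a k := by
    intro k
    rw [hrecA k]
    have h2b : (0:ℝ) < 2 - b := by linarith
    have := mul_nonneg (mul_nonneg hb0.le h2b.le) (sq_nonneg (y k))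
    linarith
  have hmono' : ∀ p q : ℕ, p ≤ q → a q ≤ a p := by
    intro p q hpq
    induction q, hpq using Nat.le_induction with
    | base => exact le_refl _
    | succ q hq ih => exact le_trans (hmono q) ih
  have hnormmono : ∀ k, k ≤ m → ‖f m‖ ≤ ‖f k‖ := by
    intro k hk
    have h1 : a m ≤ a k := hmono' k m hk
    have h2 : √(a m) ≤ √(a k) := Real.sqrt_le_sqrt h1
    rwa [show a m = ‖f m‖^2 from rfl, show a k = ‖f k‖^2 from rfl,
      Real.sqrt_sq (norm_nonneg _), Real.sqrt_sq (norm_nonneg _)] at h2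
  by_cases hcase : ‖f m‖ ≤ ε / (1 - h)
  · exact le_max_of_le_left hcase
  push_neg at hcase
  -- ‖fε‖ ≤ B
  have hball : A1 D ⊆ Metric.closedBall (0:H) 1 := by
    unfold A1
    refine closure_minimal (convexHull_min ?_ (convex_closedBall 0 1)) Metric.isClosed_closedBall
    intro g hg
    simp [Metric.mem_closedBall, dist_zero_right, (hDnorm g hg).le]
  have hfεB : ‖fε‖ ≤ B := by
    have h1 := hball hfε
    rw [Metric.mem_closedBall, dist_zero_right, norm_smul, Real.norm_eq_abs,
      abs_of_pos (inv_pos.mpr hB), inv_mul_le_iff₀ hB, mul_one] at h1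
    exact h1
  have hf0n : ‖f 0‖ ≤ B + 1 := by
    rw [hf0]
    calc ‖f₀‖ = ‖(f₀ - fε) + fε‖ := by rw [sub_add_cancel]
      _ ≤ ‖f₀ - fε‖ + ‖fε‖ := norm_add_le _ _
      _ ≤ ε + B := add_le_add hnoise hfεB
      _ ≤ B + 1 := by linarith
  have ha0 : a 0 ≤ (B + 1) ^ 2 := pow_le_pow_left₀ (norm_nonneg _) hf0n 2
  -- key inequality
  have hμkey : ∀ k, k < m →
      t * h * a k ≤ y k * (B + b * ∑ j ∈ Finset.range k, y j) := by
    intro k hk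
    have hfk : ε ≤ (1 - h) * ‖f k‖ := by
      have h1 : ε / (1 - h) < ‖f k‖ := lt_of_lt_of_le hcase (hnormmono k hk.le)
      rw [div_lt_iff₀ (by linarith : (0:ℝ) < 1 - h)] at h1
      linarith
    have hμA1 : ⟪f k, B⁻¹ • fε⟫ ≤ μ k := by
      have hsub : A1 D ⊆ {x : H | ⟪f k, x⟫ ≤ μ k} := by
        unfold A1
        refine closure_minimal (convexHull_min ?_ ?_) ?_
        · intro g hg; exact hμle k g hg
        · exact convex_halfSpace_le
            ⟨fun x z => inner_add_right _ _ _, fun c x => real_inner_smul_right _ _ _⟩ _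
        · exact isClosed_le (Continuous.inner continuous_const continuous_id) continuous_const
      exact hsub hfε
    have c1 : ⟪f k, fε⟫ ≤ B * μ k := by
      have e : ⟪f k, fε⟫ = B * ⟪f k, B⁻¹ • fε⟫ := by
        rw [real_inner_smul_right]
        field_simp
      rw [e]
      exact mul_le_mul_of_nonneg_left hμA1 hB.le
    have c2 : ⟪f k, f 0⟫ - ε * ‖f k‖ ≤ ⟪f k, fε⟫ := by
      have e : ⟪f k, f 0 - fε⟫ = ⟪f k, f 0⟫ - ⟪f k, fε⟫ := inner_sub_right _ _ _
      have hcs : ⟪f k, f 0 - fε⟫ ≤ ‖f k‖ * ‖f 0 - fε‖ := real_inner_le_norm _ _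
      have hn : ‖f 0 - fε‖ ≤ ε := by rw [hf0]; exact hnoise
      have := mul_le_mul_of_nonneg_left hn (norm_nonneg (f k))
      linarith
    have c3 : a k - (b * ∑ j ∈ Finset.range k, y j) * μ k ≤ ⟪f k, f 0⟫ := by
      have e : ⟪f k, f 0 - f k⟫ = ⟪f k, f 0⟫ - ⟪f k, f k⟫ := inner_sub_right _ _ _
      have e2 : ⟪f k, f 0 - f k⟫ = ∑ j ∈ Finset.range k, (b * y j) * ⟪f k, φ (j+1)⟫ := by
        rw [htel k, inner_sum]
        exact Finset.sum_congr rfl fun j _ => real_inner_smul_right _ _ _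
      have hterm : ∀ j ∈ Finset.range k, -((b * y j) * μ k) ≤ (b * y j) * ⟪f k, φ (j+1)⟫ := by
        intro j _
        have hneg : -μ k ≤ ⟪f k, φ (j+1)⟫ := by
          have h2 := hμle k (-(φ (j+1))) (hDsymm _ (hφD j))
          rw [inner_neg_right] at h2
          linarith
        calc -((b * y j) * μ k) = (b * y j) * (-μ k) := by ring
          _ ≤ (b * y j) * ⟪f k, φ (j+1)⟫ :=
              mul_le_mul_of_nonneg_left hneg (mul_nonneg hb0.le (hy0 j))
      have hsum := Finset.sum_le_sum hterm
      have e3 : ∑ j ∈ Finset.range k, -((b * y j) * μ k)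
          = -((b * ∑ j ∈ Finset.range k, y j) * μ k) := by
        rw [Finset.sum_neg_distrib]
        congr 1
        rw [Finset.mul_sum, Finset.sum_mul]
      have e4 : ⟪f k, f k⟫ = a k := real_inner_self_eq_norm_sq _
      rw [e3, ← e2] at hsum
      linarith
    have c4 : ε * ‖f k‖ ≤ (1 - h) * a k := by
      have h1 := mul_le_mul_of_nonneg_right hfk (norm_nonneg (f k))
      have haeq : a k = ‖f k‖ ^ 2 := rfl
      nlinarith [h1]
    have c5 : h * a k ≤ B * μ k + (b * ∑ j ∈ Finset.range k, y j) * μ k := by linarith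
    have hBS : (0:ℝ) ≤ B + b * ∑ j ∈ Finset.range k, y j := by
      have := Finset.sum_nonneg (fun j (_ : j ∈ Finset.range k) => hy0 j)
      nlinarith
    have c6 := mul_le_mul_of_nonneg_left c5 ht0.le
    have c7 := mul_le_mul_of_nonneg_right (hyμ k) hBS
    calc t * h * a k = t * (h * a k) := by ring
      _ ≤ t * (B * μ k + (b * ∑ j ∈ Finset.range k, y j) * μ k) := c6
      _ = (t * μ k) * (B + b * ∑ j ∈ Finset.range k, y j) := by ring
      _ ≤ y k * (B + b * ∑ j ∈ Finset.range k, y j) := c7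
  have main := aux_main b t h B β hb0 hb1 ht0 ht1 hh0 hh1 hB hβ m hm1 a y
    ha0 hanonneg hy0 (fun k _ => hrecA k) hμkey
  -- convert
  set X := b * (2 - b) * (m:ℝ) * h ^ 2 * t ^ 2 with hX
  have hm1' : (1:ℝ) ≤ (m:ℝ) := by exact_mod_cast hm1
  have hXpos : (0:ℝ) < X := by
    rw [hX]
    have h2b : (0:ℝ) < 2 - b := by linarith
    have hmpos : (0:ℝ) < (m:ℝ) := by linarith
    exact mul_pos (mul_pos (mul_pos (mul_pos hb0 h2b) hmpos) (pow_pos hh0 2)) (pow_pos ht0 2)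
  set R := (B + 1) * X ^ (-(β / (2 * (1 + β)))) with hR
  have hβpos : 0 < β := by
    rw [hβ]
    have h1 : (0:ℝ) < 1 - b / 2 := by linarith
    positivity
  have hRnn : 0 ≤ R := by
    rw [hR]
    exact mul_nonneg (by linarith) (Real.rpow_nonneg hXpos.le _)
  have hR2 : R ^ 2 = (B + 1) ^ 2 * X ^ (-(β / (1 + β))) := by
    rw [hR, mul_pow, ← Real.rpow_natCast (X ^ (-(β / (2 * (1 + β))))) 2,
      ← Real.rpow_mul hXpos.le]
    congr 2
    push_cast
    field_simp
  have hfinal : ‖f m‖ ≤ R := by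
    have h1 : a m ≤ R ^ 2 := by rw [hR2]; exact main
    have h2 : √(a m) ≤ √(R ^ 2) := Real.sqrt_le_sqrt h1
    rwa [show a m = ‖f m‖^2 from rfl, Real.sqrt_sq (norm_nonneg _),
      Real.sqrt_sq hRnn] at h2
  exact le_max_of_le_right hfinal
end

section
/- Let H be a real Hilbert space, D ⊆ H a symmetric dictionary, b ∈ (0,1], t ∈ (0,1], h ∈ (0,1), B > 0, and set β := (1 − b/2)·h·t. Then there exists a constant C₁ > 0, depending only on t, b, h, and B (and not on ε), such that the following holds: for every ε ∈ (0,1], every pair f, f^ε ∈ H with ‖f − f^ε‖ ≤ ε and f^ε/B ∈ A₁(D), every realization (f_m, φ_m) of the Weak Greedy Algorithm WGA(t,b) applied to f, and every integer m with (2ε)^{−2} ≤ m ≤ ε^{−2}, one has ‖f_m‖ ≤ C₁·ε^{β/(1+β)}. -/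
open scoped RealInnerProductSpace

section Aux
variable {H : Type*} [NormedAddCommGroup H] [InnerProductSpace ℝ H]

lemma A1_inner_le {D : Set H} (hDnorm : ∀ g ∈ D, ‖g‖ = 1) {x : H} (hx : x ∈ A1 D) (v : H) :
    ⟪v, x⟫ ≤ sSup {r : ℝ | ∃ g ∈ D, r = ⟪v, g⟫} := by
  set σ := sSup {r : ℝ | ∃ g ∈ D, r = ⟪v, g⟫} with hσ
  have hbdd : BddAbove {r : ℝ | ∃ g ∈ D, r = ⟪v, g⟫} := by
    refine ⟨‖v‖, ?_⟩
    rintro r ⟨g, hg, rfl⟩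
    calc ⟪v, g⟫ ≤ ‖v‖ * ‖g‖ := real_inner_le_norm v g
    _ = ‖v‖ := by rw [hDnorm g hg, mul_one]
  have hsub : A1 D ⊆ {y | ⟪v, y⟫ ≤ σ} := by
    apply closure_minimal
    · apply convexHull_min
      · intro g hg
        exact le_csSup hbdd ⟨g, hg, rfl⟩
      · exact convex_halfSpace_le
          ⟨fun a c => inner_add_right v a c, fun r a => real_inner_smul_right v a r⟩ σ
    · exact isClosed_le (Continuous.inner continuous_const continuous_id) continuous_const
  exact hsub hx

lemma A1_norm_le {D : Set H} (hDnorm : ∀ g ∈ D, ‖g‖ = 1) {x : H} (hx : x ∈ A1 D) : ‖x‖ ≤ 1 := by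
  have hsub : A1 D ⊆ Metric.closedBall (0 : H) 1 := by
    apply closure_minimal
    · apply convexHull_min
      · intro g hg
        rw [Metric.mem_closedBall, dist_zero_right, hDnorm g hg]
      · exact convex_closedBall 0 1
    · exact Metric.isClosed_closedBall
  have := hsub hx
  rwa [Metric.mem_closedBall, dist_zero_right] at this

lemma rate_lemma {x : ℕ → ℝ} {c q : ℝ} (hc : 0 < c) (hq : 1 ≤ q) {m : ℕ}
    (hpos : ∀ k ≤ m, 0 < x k)
    (hrec : ∀ k < m, x (k + 1) ≤ x k - c * x k ^ (1 + q)) :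
    c * q * m ≤ x m ^ (-q) := by
  have key : ∀ k ≤ m, x 0 ^ (-q) + c * q * k ≤ x k ^ (-q) := by
    intro k hk
    induction k with
    | zero => simp
    | succ n ih =>
      have hn1 : n + 1 ≤ m := hk
      have hnm : n < m := hn1
      have ihn := ih hnm.le
      have hxn : 0 < x n := hpos n hnm.le
      have hxn1 : 0 < x (n + 1) := hpos (n + 1) hn1
      have hr := hrec n hnm
      set u := c * x n ^ q with hu_def
      have hu : 0 < u := by
        have := Real.rpow_pos_of_pos hxn q
        positivity
      have hsplit : x n ^ (1 + q) = x n * x n ^ q := by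
        rw [Real.rpow_add hxn, Real.rpow_one]
      have hr' : x (n + 1) ≤ x n * (1 - u) := by
        rw [hsplit] at hr
        calc x (n + 1) ≤ x n - c * (x n * x n ^ q) := hr
        _ = x n * (1 - u) := by rw [hu_def]; ring
      have h1u : 0 < 1 - u := by nlinarith
      -- Bernoulli: 1 + q * u ≤ (1 - u) ^ (-q)
      have hber : 1 + q * u ≤ (1 - u) ^ (-q) := by
        set s := u / (1 - u) with hs_def
        have hs : 0 ≤ s := by positivity
        have hb1 := one_add_mul_self_le_rpow_one_add (by linarith : (-1 : ℝ) ≤ s) hq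
        have h1s : 1 + s = (1 - u)⁻¹ := by rw [hs_def]; field_simp; ring
        have heq : (1 + s) ^ q = (1 - u) ^ (-q) := by
          rw [h1s, Real.inv_rpow h1u.le, Real.rpow_neg h1u.le]
        have hsu : u ≤ s := by
          rw [hs_def, le_div_iff₀ h1u]
          nlinarith
        calc 1 + q * u ≤ 1 + q * s := by nlinarith
        _ ≤ (1 + s) ^ q := hb1
        _ = (1 - u) ^ (-q) := heq
      have hxnq : 0 < x n ^ (-q) := Real.rpow_pos_of_pos hxn _
      have step : x n ^ (-q) + c * q ≤ x (n + 1) ^ (-q) := by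
        have h1 : (x n * (1 - u)) ^ (-q) ≤ x (n + 1) ^ (-q) :=
          Real.rpow_le_rpow_of_nonpos hxn1 hr' (by linarith)
        have h2 : (x n * (1 - u)) ^ (-q) = x n ^ (-q) * (1 - u) ^ (-q) :=
          Real.mul_rpow hxn.le h1u.le
        have h3 : x n ^ (-q) * (1 + q * u) ≤ x n ^ (-q) * (1 - u) ^ (-q) :=
          mul_le_mul_of_nonneg_left hber hxnq.le
        have h4 : x n ^ q * x n ^ (-q) = 1 := by
          rw [← Real.rpow_add hxn, add_neg_cancel, Real.rpow_zero]
        have h5 : x n ^ (-q) * (1 + q * u) = x n ^ (-q) + c * q := by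
          rw [hu_def]
          calc x n ^ (-q) * (1 + q * (c * x n ^ q))
              = x n ^ (-q) + c * q * (x n ^ q * x n ^ (-q)) := by ring
          _ = x n ^ (-q) + c * q := by rw [h4, mul_one]
        linarith [h1, h2.symm ▸ h1]
      have : x 0 ^ (-q) + c * q * n + c * q ≤ x (n + 1) ^ (-q) := by linarith
      calc x 0 ^ (-q) + c * q * (n + 1 : ℕ) = x 0 ^ (-q) + c * q * n + c * q := by
            push_cast; ring
      _ ≤ x (n + 1) ^ (-q) := this
  have h0 : 0 < x 0 ^ (-q) := Real.rpow_pos_of_pos (hpos 0 (Nat.zero_le m)) _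
  linarith [key m le_rfl]

end Aux

set_option maxHeartbeats 2000000 in
/-- There is a constant `C₁ > 0`, independent of `ε`, such that for any noisy data
`‖f - f^ε‖ ≤ ε`, `f^ε/B ∈ A₁(D)`, any realization of the WGA(t,b) applied to `f`,
and any number of iterations `m ∈ [(2ε)⁻², ε⁻²]`, one has
`‖f_m‖ ≤ C₁ ε^{β/(1+β)}`, where `β = (1-b/2) h t`. -/
theorem stmt_3 {H : Type*} [NormedAddCommGroup H] [InnerProductSpace ℝ H] [CompleteSpace H]
    (D : Set H)
    (hDnorm : ∀ g ∈ D, ‖g‖ = 1) (hDsymm : ∀ g ∈ D, -g ∈ D)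
    (hDspan : (Submodule.span ℝ D).topologicalClosure = ⊤)
    (b : ℝ) (hb : b ∈ Set.Ioc (0:ℝ) 1)
    (t : ℝ) (ht : t ∈ Set.Ioc (0:ℝ) 1)
    (h : ℝ) (hh : h ∈ Set.Ioo (0:ℝ) 1)
    (B : ℝ) (hB : 0 < B)
    (β : ℝ) (hβ : β = (1 - b / 2) * h * t) :
    ∃ C₁ : ℝ, 0 < C₁ ∧
      ∀ ε : ℝ, ε ∈ Set.Ioc (0:ℝ) 1 →
      ∀ f₀ fε : H, ‖f₀ - fε‖ ≤ ε → B⁻¹ • fε ∈ A1 D →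
      ∀ f : ℕ → H, ∀ φ : ℕ → H, f 0 = f₀ →
        (∀ m : ℕ, φ (m + 1) ∈ D) →
        (∀ m : ℕ, ⟪f m, φ (m + 1)⟫ ≥ t * sSup {r : ℝ | ∃ g ∈ D, r = ⟪f m, g⟫}) →
        (∀ m : ℕ, f (m + 1) = f m - (b * ⟪f m, φ (m + 1)⟫) • φ (m + 1)) →
        ∀ m : ℕ, (2 * ε)⁻¹ ^ 2 ≤ (m : ℝ) → (m : ℝ) ≤ ε⁻¹ ^ 2 →
          ‖f m‖ ≤ C₁ * ε ^ (β / (1 + β)) := by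
  obtain ⟨hb0, hb1⟩ := hb
  obtain ⟨ht0, ht1⟩ := ht
  obtain ⟨hh0, hh1⟩ := hh
  have hb2 : 0 < 1 - b / 2 := by linarith
  have hβ0 : 0 < β := by rw [hβ]; positivity
  set γ := β / (1 + β) with hγ_def
  have hγ0 : 0 < γ := div_pos hβ0 (by linarith)
  have hγ1 : γ ≤ 1 := by
    rw [hγ_def, div_le_one (by linarith)]; linarith
  set κ := b * (2 - b) with hκ_def
  have hκ : 0 < κ := by nlinarith
  set q := 1 + 1 / β with hq_def
  have hq1 : 1 ≤ q := by
    rw [hq_def]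
    have : 0 < 1 / β := by positivity
    linarith
  have hq0 : 0 < q := lt_of_lt_of_le one_pos hq1
  set c' := κ * t ^ 2 * h ^ 2 / (B ^ 2 * (B + 1) ^ (2 / β)) with hc'_def
  have hBp : (0:ℝ) < (B + 1) ^ (2 / β) := Real.rpow_pos_of_pos (by linarith) _
  have hc' : 0 < c' := by
    exact div_pos (mul_pos (mul_pos hκ (pow_pos ht0 2)) (pow_pos hh0 2)) (mul_pos (pow_pos hB 2) hBp)
  have hγq : γ = 1 / q := by
    have hβne : β ≠ 0 := ne_of_gt hβ0
    have h1βne : 1 + β ≠ 0 := by positivity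
    rw [hγ_def, hq_def]
    rw [div_eq_div_iff (by linarith) (by positivity)]
    field_simp
    ring
  set C₂ := (c' * q) ^ (-(γ / 2)) with hC₂_def
  have hC₂ : 0 < C₂ := Real.rpow_pos_of_pos (mul_pos hc' hq0) _
  have hC₁pos : 0 < 1 / (1 - h) + 2 * C₂ := by
    have h1 : 0 < 1 / (1 - h) := div_pos one_pos (by linarith)
    linarith
  refine ⟨1 / (1 - h) + 2 * C₂, hC₁pos, ?_⟩
  intro ε hε f₀ fε hnoise hfA f φ hf0 hφD hφge hrec m hmlo hmhi
  obtain ⟨hε0, hε1⟩ := hε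
  have hεγ : ε ≤ ε ^ γ := by
    calc ε = ε ^ (1:ℝ) := (Real.rpow_one ε).symm
    _ ≤ ε ^ γ := Real.rpow_le_rpow_of_exponent_ge hε0 hε1 hγ1
  have hεγ0 : 0 < ε ^ γ := Real.rpow_pos_of_pos hε0 _
  -- basic sequences
  set a : ℕ → ℝ := fun k => ‖f k‖ ^ 2 with ha_def
  set c : ℕ → ℝ := fun k => ⟪f k, φ (k + 1)⟫ with hc_def
  set σ : ℕ → ℝ := fun k => sSup {r : ℝ | ∃ g ∈ D, r = ⟪f k, g⟫} with hσ_def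
  set S : ℕ → ℝ := fun k => ∑ j ∈ Finset.range k, c j with hS_def
  have ha0 : ∀ k, 0 ≤ a k := fun k => sq_nonneg _
  have hDne : D.Nonempty := by
    by_contra hgoal
    rw [Set.not_nonempty_iff_eq_empty] at hgoal
    rw [A1, hgoal] at hfA
    simp at hfA
  have hbdd : ∀ k, BddAbove {r : ℝ | ∃ g ∈ D, r = ⟪f k, g⟫} := by
    intro k
    refine ⟨‖f k‖, ?_⟩
    rintro r ⟨g, hg, rfl⟩
    calc ⟪f k, g⟫ ≤ ‖f k‖ * ‖g‖ := real_inner_le_norm _ _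
    _ = ‖f k‖ := by rw [hDnorm g hg, mul_one]
  have hσ0 : ∀ k, 0 ≤ σ k := by
    intro k
    obtain ⟨g, hg⟩ := hDne
    have h1 : ⟪f k, g⟫ ≤ σ k := le_csSup (hbdd k) ⟨g, hg, rfl⟩
    have h2 : -⟪f k, g⟫ ≤ σ k := by
      refine le_csSup (hbdd k) ⟨-g, hDsymm g hg, ?_⟩
      rw [inner_neg_right]
    linarith
  have hφlb : ∀ k j, -σ k ≤ ⟪f k, φ (j + 1)⟫ := by
    intro k j
    have h2 : -⟪f k, φ (j + 1)⟫ ≤ σ k := by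
      refine le_csSup (hbdd k) ⟨-(φ (j + 1)), hDsymm _ (hφD j), ?_⟩
      rw [inner_neg_right]
    linarith
  have hcσ : ∀ k, t * σ k ≤ c k := fun k => hφge k
  have hc0 : ∀ k, 0 ≤ c k := fun k =>
    le_trans (mul_nonneg ht0.le (hσ0 k)) (hcσ k)
  have hS0 : ∀ k, 0 ≤ S k := fun k =>
    Finset.sum_nonneg fun j _ => hc0 j
  have hBS : ∀ k, 0 < B + b * S k := fun k => by
    have h2 : 0 ≤ b * S k := mul_nonneg hb0.le (hS0 k)
    linarith only [hB, h2]
  have hSsucc : ∀ k, S (k + 1) = S k + c k := fun k => Finset.sum_range_succ c k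
  have hstep : ∀ k, a (k + 1) = a k - κ * c k ^ 2 := by
    intro k
    have hφn : ‖φ (k + 1)‖ = 1 := hDnorm _ (hφD k)
    show ‖f (k + 1)‖ ^ 2 = ‖f k‖ ^ 2 - κ * c k ^ 2
    rw [hrec k, norm_sub_sq_real, real_inner_smul_right, norm_smul, hφn, mul_one,
      Real.norm_eq_abs, sq_abs, hκ_def]
    have : ⟪f k, φ (k + 1)⟫ = c k := rfl
    rw [this]; ring
  have hamono : ∀ j k, j ≤ k → a k ≤ a j := by
    have : ∀ i, a (i + 1) ≤ a i := by
      intro i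
      rw [hstep i]
      have h0 : 0 ≤ κ * c i ^ 2 := mul_nonneg hκ.le (sq_nonneg _)
      linarith only [h0]
    intro j k hjk
    exact antitone_nat_of_succ_le this hjk
  have hsqrt : ∀ k, Real.sqrt (a k) = ‖f k‖ := fun k =>
    Real.sqrt_sq (norm_nonneg _)
  -- norm of fε and a 0 bound
  have hfεnorm : ‖fε‖ ≤ B := by
    have h1 : ‖B⁻¹ • fε‖ ≤ 1 := A1_norm_le hDnorm hfA
    rw [norm_smul, Real.norm_eq_abs, abs_of_pos (inv_pos.mpr hB)] at h1
    calc ‖fε‖ = B * (B⁻¹ * ‖fε‖) := by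
          rw [← mul_assoc, mul_inv_cancel₀ (ne_of_gt hB), one_mul]
    _ ≤ B * 1 := mul_le_mul_of_nonneg_left h1 hB.le
    _ = B := mul_one B
  have ha0B : a 0 ≤ (B + 1) ^ 2 := by
    have h1 : ‖f 0‖ ≤ B + 1 := by
      have h2 : ‖f 0 - fε‖ ≤ ε := by rw [hf0]; exact hnoise
      have h3 : ‖f 0‖ - ‖fε‖ ≤ ‖f 0 - fε‖ := norm_sub_norm_le _ _
      linarith
    show ‖f 0‖ ^ 2 ≤ (B + 1) ^ 2
    exact pow_le_pow_left₀ (norm_nonneg _) h1 2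
  have hinner_fε : ∀ k, ⟪f k, fε⟫ ≤ B * σ k := by
    intro k
    have h1 : ⟪f k, B⁻¹ • fε⟫ ≤ σ k := A1_inner_le hDnorm hfA (f k)
    rw [real_inner_smul_right] at h1
    have h2 := mul_le_mul_of_nonneg_left h1 hB.le
    calc ⟪f k, fε⟫ = B * (B⁻¹ * ⟪f k, fε⟫) := by
          rw [← mul_assoc, mul_inv_cancel₀ (ne_of_gt hB), one_mul]
    _ ≤ B * σ k := h2
  -- decomposition
  have hdecomp : ∀ k, f 0 - f k = ∑ j ∈ Finset.range k, (b * c j) • φ (j + 1) := by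
    intro k
    induction k with
    | zero => rw [Finset.range_zero, Finset.sum_empty, sub_self]
    | succ n ih =>
      rw [Finset.sum_range_succ, ← ih, hrec n]
      have : ⟪f n, φ (n + 1)⟫ = c n := rfl
      rw [this]
      abel
  have hinner0 : ∀ k, a k ≤ B * σ k + ε * Real.sqrt (a k) + b * σ k * S k := by
    intro k
    have e1 : ⟪f k, f k⟫ = a k := real_inner_self_eq_norm_sq (f k)
    have e2 : ⟪f k, f 0 - f k⟫ = ∑ j ∈ Finset.range k, b * c j * ⟪f k, φ (j + 1)⟫ := by
      rw [hdecomp k, inner_sum]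
      exact Finset.sum_congr rfl fun j _ => real_inner_smul_right _ _ _
    have e3 : -(b * σ k * S k) ≤ ⟪f k, f 0 - f k⟫ := by
      rw [e2, hS_def]
      have : -(b * σ k * ∑ j ∈ Finset.range k, c j)
          = ∑ j ∈ Finset.range k, b * c j * (-σ k) := by
        rw [Finset.mul_sum]; rw [← Finset.sum_neg_distrib]
        exact Finset.sum_congr rfl fun j _ => by ring
      rw [this]
      refine Finset.sum_le_sum fun j _ => ?_
      exact mul_le_mul_of_nonneg_left (hφlb k j) (mul_nonneg hb0.le (hc0 j))
    have e4 : ⟪f k, f 0⟫ ≤ B * σ k + ε * Real.sqrt (a k) := by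
      have h5 : ⟪f k, f 0⟫ = ⟪f k, fε⟫ + ⟪f k, f 0 - fε⟫ := by
        rw [inner_sub_right]; ring
      have h6 : ⟪f k, f 0 - fε⟫ ≤ ‖f k‖ * ‖f 0 - fε‖ := real_inner_le_norm _ _
      have h7 : ‖f 0 - fε‖ ≤ ε := by rw [hf0]; exact hnoise
      have h8 : ‖f k‖ * ‖f 0 - fε‖ ≤ ‖f k‖ * ε :=
        mul_le_mul_of_nonneg_left h7 (norm_nonneg _)
      rw [hsqrt k]
      calc ⟪f k, f 0⟫ = ⟪f k, fε⟫ + ⟪f k, f 0 - fε⟫ := h5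
      _ ≤ B * σ k + ‖f k‖ * ε := add_le_add (hinner_fε k) (h6.trans h8)
      _ = B * σ k + ε * ‖f k‖ := by ring
    have e5 : ⟪f k, f 0⟫ = a k + ⟪f k, f 0 - f k⟫ := by
      rw [inner_sub_right, e1]; ring
    linarith only [e3, e4, e5]
  have hm0 : 0 < m := by
    rcases Nat.eq_zero_or_pos m with hm | hm
    · exfalso
      rw [hm] at hmlo
      have h2ε : 0 < (2 * ε)⁻¹ ^ 2 := by positivity
      push_cast at hmlo
      linarith only [hmlo, h2ε]
    · exact hm
  by_cases hgood : ∀ k, k ≤ m → ε ≤ (1 - h) * Real.sqrt (a k)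
  · -- good case: full rate analysis
    have h1h : (0:ℝ) < 1 - h := by linarith
    have hapos : ∀ k, k ≤ m → 0 < a k := by
      intro k hk
      have h2 := hgood k hk
      have h3 : 0 < Real.sqrt (a k) := by
        rcases eq_or_lt_of_le (Real.sqrt_nonneg (a k)) with h5 | h5
        · exfalso
          rw [← h5, mul_zero] at h2
          linarith only [h2, hε0]
        · exact h5
      exact Real.sqrt_pos.mp h3
    have hσlb : ∀ k, k ≤ m → h * a k ≤ σ k * (B + b * S k) := by
      intro k hk
      have h1 := hinner0 k
      have h2 : ε * Real.sqrt (a k) ≤ (1 - h) * a k := by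
        have h3 := hgood k hk
        have h4 : Real.sqrt (a k) * ε ≤ Real.sqrt (a k) * ((1 - h) * Real.sqrt (a k)) :=
          mul_le_mul_of_nonneg_left h3 (Real.sqrt_nonneg _)
        have h5 : Real.sqrt (a k) * Real.sqrt (a k)
            = a k := Real.mul_self_sqrt (ha0 k)
        have h6 : Real.sqrt (a k) * ((1 - h) * Real.sqrt (a k)) = (1 - h) * a k := by
          have h7 : Real.sqrt (a k) * ((1 - h) * Real.sqrt (a k))
              = (1 - h) * (Real.sqrt (a k) * Real.sqrt (a k)) := by ring
          rw [h7, h5]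
        rw [h6] at h4
        linarith only [h4]
      have h9 : σ k * (B + b * S k) = B * σ k + b * σ k * S k := by ring
      linarith only [h1, h2, h9]
    have hc1 : ∀ k, k ≤ m → t * h * a k ≤ c k * (B + b * S k) := by
      intro k hk
      have h6 := hσlb k hk
      have h7 : t * (h * a k) ≤ t * (σ k * (B + b * S k)) :=
        mul_le_mul_of_nonneg_left h6 ht0.le
      have h8 : (t * σ k) * (B + b * S k) ≤ c k * (B + b * S k) :=
        mul_le_mul_of_nonneg_right (hcσ k) (hBS k).le
      linarith only [h7, h8]
    have hid : κ * t * h = 2 * b * β := by rw [hβ, hκ_def]; ring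
    -- the key induction
    have hP : ∀ k, k ≤ m → a k * (B + b * S k) ^ (2*β) ≤ a 0 * B ^ (2*β) := by
      intro k hk
      induction k with
      | zero =>
        have hS00 : S 0 = 0 := Finset.sum_range_zero c
        rw [hS00, mul_zero, add_zero]
      | succ n ih =>
        have hnm : n < m := hk
        have ihn := ih hnm.le
        have hX0 : 0 < B + b * S n := hBS n
        set X := B + b * S n with hX_def
        set u := b * c n / X with hu_def
        have hu0 : 0 ≤ u := div_nonneg (mul_nonneg hb0.le (hc0 n)) hX0.le
        have huX : u * X = b * c n := by
          rw [hu_def, div_mul_eq_mul_div, mul_div_assoc, div_self (ne_of_gt hX0), mul_one]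
        have hXsucc : B + b * S (n+1) = X * (1 + u) := by
          have h7 : X * (1 + u) = X + u * X := by ring
          rw [h7, huX, hSsucc n, hX_def]
          ring
        have key1 : a (n+1) ≤ a n * (1 - 2*β*u) := by
          rw [hstep n]
          have h9 : κ * (t * h * a n) * c n ≤ κ * (c n * X) * c n :=
            mul_le_mul_of_nonneg_right
              (mul_le_mul_of_nonneg_left (hc1 n hnm.le) hκ.le) (hc0 n)
          have h10 : (2*β*u*a n) * X ≤ (κ * c n^2) * X := by
            calc (2*β*u*a n) * X = 2*β*(u*X)*a n := by ring
            _ = (2*b*β)*(a n * c n) := by rw [huX]; ring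
            _ = (κ*t*h) * (a n * c n) := by rw [hid]
            _ = κ * (t*h*a n) * c n := by ring
            _ ≤ κ * (c n * X) * c n := h9
            _ = (κ * c n^2)*X := by ring
          have h11 : 2*β*u*a n ≤ κ * c n^2 := le_of_mul_le_mul_right h10 hX0
          have h12 : a n * (1 - 2*β*u) = a n - 2*β*u*a n := by ring
          rw [h12]
          linarith only [h11]
        have hup : (0:ℝ) < (1+u)^(2*β) := Real.rpow_pos_of_pos (by linarith) _
        have hbern : (1 - 2*β*u) * (1+u) ^ (2*β) ≤ 1 := by
          have e1 : (1:ℝ) - 2*β*u ≤ Real.exp (-(2*β*u)) := by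
            have := Real.add_one_le_exp (-(2*β*u)); linarith only [this]
          have e2 : Real.log (1+u) ≤ u := by
            have := Real.log_le_sub_one_of_pos
              (show (0:ℝ) < 1+u by linarith only [hu0])
            linarith only [this]
          have e3 : Real.exp (-(2*β*u)) ≤ Real.exp (-(2*β*Real.log (1+u))) := by
            apply Real.exp_le_exp.mpr
            have e2b : 2*β*Real.log (1+u) ≤ 2*β*u :=
              mul_le_mul_of_nonneg_left e2 (by linarith only [hβ0])
            linarith only [e2b]
          have e4 : Real.exp (2*β * Real.log (1+u)) = (1+u)^(2*β) := by
            rw [Real.rpow_def_of_pos (show (0:ℝ) < 1+u by linarith), mul_comm]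
          have e5 : Real.exp (-(2*β*Real.log (1+u))) = ((1+u)^(2*β))⁻¹ := by
            rw [Real.exp_neg, e4]
          have e6 : (1:ℝ) - 2*β*u ≤ ((1+u)^(2*β))⁻¹ := by
            rw [← e5]; exact e1.trans e3
          calc (1 - 2*β*u) * (1+u)^(2*β) ≤ ((1+u)^(2*β))⁻¹ * (1+u)^(2*β) :=
                mul_le_mul_of_nonneg_right e6 hup.le
          _ = 1 := inv_mul_cancel₀ (ne_of_gt hup)
        have hXpow : (0:ℝ) < X^(2*β) := Real.rpow_pos_of_pos hX0 _
        calc a (n+1) * (B + b * S (n+1)) ^ (2*β)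
            = a (n+1) * (X ^ (2*β) * (1+u)^(2*β)) := by
              rw [hXsucc, Real.mul_rpow hX0.le (by linarith : (0:ℝ) ≤ 1+u)]
        _ ≤ (a n * (1 - 2*β*u)) * (X ^ (2*β) * (1+u)^(2*β)) :=
              mul_le_mul_of_nonneg_right key1 (mul_nonneg hXpow.le hup.le)
        _ = (a n * X ^ (2*β)) * ((1 - 2*β*u) * (1+u)^(2*β)) := by ring
        _ ≤ (a n * X ^ (2*β)) * 1 :=
              mul_le_mul_of_nonneg_left hbern (mul_nonneg (ha0 n) hXpow.le)
        _ = a n * X ^ (2*β) := mul_one _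
        _ ≤ a 0 * B ^ (2*β) := ihn
    -- recursion with power
    have hβne : β ≠ 0 := ne_of_gt hβ0
    have hrec' : ∀ k, k < m → a (k+1) ≤ a k - c' * a k ^ (1+q) := by
      intro k hkm
      have hk := hkm.le
      have hak : 0 < a k := hapos k hk
      have hX0 : 0 < B + b * S k := hBS k
      set X := B + b * S k with hX_def
      have hakr : 0 < a k ^ (1/β) := Real.rpow_pos_of_pos hak _
      -- step 1 : X^2 * a k ^ (1/β) ≤ B^2 * (B+1)^(2/β)
      have s1 : X^(2*β) * a k ≤ (a 0 * B ^ (2*β)) := by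
        have := hP k hk
        linarith only [this]
      have s2 : (X^(2*β))^(1/β) ≤ ((a 0 * B^(2*β)) / a k)^(1/β) := by
        apply Real.rpow_le_rpow (Real.rpow_nonneg hX0.le _) _ (by positivity)
        rw [le_div_iff₀ hak]
        exact s1
      have s3 : (X^(2*β))^(1/β) = X^(2:ℝ) := by
        rw [← Real.rpow_mul hX0.le]
        congr 1
        field_simp
      have s4 : ((a 0 * B^(2*β)) / a k)^(1/β)
          = a 0 ^(1/β) * B^(2:ℝ) / a k ^(1/β) := by
        rw [Real.div_rpow (by positivity) (ha0 k),
          Real.mul_rpow (ha0 0) (Real.rpow_nonneg hB.le _),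
          ← Real.rpow_mul hB.le]
        congr 2
        field_simp
      have s5 : a 0 ^ (1/β) ≤ (B+1)^(2/β) := by
        have s6 : a 0 ^ (1/β) ≤ ((B+1)^(2:ℝ)) ^ (1/β) := by
          apply Real.rpow_le_rpow (ha0 0) _ (by positivity)
          rw [Real.rpow_two]
          exact ha0B
        rw [← Real.rpow_mul (by linarith : (0:ℝ) ≤ B+1)] at s6
        have : (2:ℝ) * (1/β) = 2/β := by ring
        rwa [this] at s6
      have s7 : X^(2:ℝ) ≤ B^(2:ℝ) * (B+1)^(2/β) / a k ^ (1/β) := by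
        calc X^(2:ℝ) = (X^(2*β))^(1/β) := s3.symm
        _ ≤ ((a 0 * B^(2*β)) / a k)^(1/β) := s2
        _ = a 0 ^(1/β) * B^(2:ℝ) / a k ^(1/β) := s4
        _ = B^(2:ℝ) * a 0 ^(1/β) / a k ^(1/β) := by ring
        _ ≤ B^(2:ℝ) * (B+1)^(2/β) / a k ^ (1/β) :=
            div_le_div_of_nonneg_right
              (mul_le_mul_of_nonneg_left s5 (Real.rpow_nonneg hB.le _)) hakr.le
      -- now the quantitative step
      have hc2 : t*h*a k ≤ c k * X := hc1 k hk
      have hc3 : (t*h*a k)^2 ≤ c k^2 * X^(2:ℝ) := by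
        rw [Real.rpow_two]
        have h21 : (t*h*a k) * (t*h*a k) ≤ (c k * X) * (c k * X) :=
          mul_le_mul hc2 hc2
            (mul_nonneg (mul_nonneg ht0.le hh0.le) hak.le)
            (mul_nonneg (hc0 k) hX0.le)
        calc (t*h*a k)^2 = (t*h*a k) * (t*h*a k) := by ring
        _ ≤ (c k * X) * (c k * X) := h21
        _ = c k^2 * X^2 := by ring
      have hc4 : (t*h*a k)^2 * a k ^ (1/β) ≤ c k^2 * (B^(2:ℝ) * (B+1)^(2/β)) := by
        have h22 : c k^2 * X^(2:ℝ) * a k ^ (1/β)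
            ≤ c k^2 * (B^(2:ℝ) * (B+1)^(2/β)) := by
          have h23 : X^(2:ℝ) * a k ^ (1/β) ≤ B^(2:ℝ) * (B+1)^(2/β) := by
            rw [← le_div_iff₀ hakr]
            exact s7
          calc c k^2 * X^(2:ℝ) * a k ^ (1/β) = c k^2 * (X^(2:ℝ) * a k ^ (1/β)) := by ring
          _ ≤ c k^2 * (B^(2:ℝ) * (B+1)^(2/β)) :=
              mul_le_mul_of_nonneg_left h23 (sq_nonneg _)
        calc (t*h*a k)^2 * a k ^ (1/β) ≤ c k^2 * X^(2:ℝ) * a k ^ (1/β) :=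
            mul_le_mul_of_nonneg_right hc3 hakr.le
        _ ≤ c k^2 * (B^(2:ℝ) * (B+1)^(2/β)) := h22
      -- convert to c' form
      have hBB : (0:ℝ) < B^(2:ℝ) * (B+1)^(2/β) := by
        have := Real.rpow_pos_of_pos hB (2:ℝ)
        exact mul_pos this hBp
      have hc5 : c' * a k ^ (1+q) ≤ κ * c k^2 := by
        have hpow : a k ^ (1+q) = a k ^ 2 * a k ^ (1/β) := by
          rw [hq_def]
          have h24 : (1:ℝ) + (1 + 1/β) = 2 + 1/β := by ring
          rw [h24, Real.rpow_add hak, Real.rpow_two]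
        have h25 : c' = κ * t^2 * h^2 / (B^(2:ℝ) * (B+1)^(2/β)) := by
          rw [hc'_def, Real.rpow_two]
        have h26 : c' * a k ^ (1+q) * (B^(2:ℝ) * (B+1)^(2/β))
            = κ * ((t*h*a k)^2 * a k ^ (1/β)) := by
          rw [h25, hpow]
          field_simp
        have h27 : c' * a k ^ (1+q) * (B^(2:ℝ) * (B+1)^(2/β))
            ≤ κ * (c k^2 * (B^(2:ℝ) * (B+1)^(2/β))) := by
          rw [h26]
          exact mul_le_mul_of_nonneg_left hc4 hκ.le
        have h28 : κ * (c k^2 * (B^(2:ℝ) * (B+1)^(2/β)))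
            = κ * c k^2 * (B^(2:ℝ) * (B+1)^(2/β)) := by ring
        rw [h28] at h27
        exact le_of_mul_le_mul_right h27 hBB
      rw [hstep k]
      linarith only [hc5]
    -- apply the rate lemma
    have hmR : (0:ℝ) < m := by exact_mod_cast hm0
    have hfin : c' * q * m ≤ a m ^ (-q) := rate_lemma hc' hq1 hapos hrec'
    have hcqm : 0 < c' * q * (m:ℝ) := mul_pos (mul_pos hc' hq0) hmR
    have ham : 0 < a m := hapos m le_rfl
    have ham2 : a m ≤ (c' * q * m) ^ (-(1/q)) := by
      have e : ((a m) ^ (-q)) ^ (-(1/q)) = a m := by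
        rw [← Real.rpow_mul ham.le]
        have : -q * -(1/q) = 1 := by field_simp
        rw [this, Real.rpow_one]
      calc a m = ((a m) ^ (-q)) ^ (-(1/q)) := e.symm
      _ ≤ (c' * q * m) ^ (-(1/q)) := by
          apply Real.rpow_le_rpow_of_nonpos hcqm hfin
          have h30 : (0:ℝ) < 1/q := by positivity
          linarith only [h30]
    -- convert to norm bound
    have hnorm : ‖f m‖ ≤ C₂ * (m:ℝ) ^ (-(γ/2)) := by
      have n1 : ‖f m‖ ≤ Real.sqrt ((c' * q * m) ^ (-(1/q))) := by
        rw [← hsqrt m]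
        exact Real.sqrt_le_sqrt ham2
      have n2 : Real.sqrt ((c' * q * m) ^ (-(1/q)))
          = (c' * q * m) ^ (-(γ/2)) := by
        rw [Real.sqrt_eq_rpow, ← Real.rpow_mul hcqm.le]
        congr 1
        rw [hγq]
        ring
      have n3 : (c' * q * (m:ℝ)) ^ (-(γ/2))
          = (c' * q) ^ (-(γ/2)) * (m:ℝ) ^ (-(γ/2)) :=
        Real.mul_rpow (mul_pos hc' hq0).le hmR.le
      rw [n2, n3] at n1
      exact n1
    -- bound m ^ (-(γ/2)) by 2 * ε ^ γ
    have hm12 : (m:ℝ) ^ (-(1/2:ℝ)) ≤ 2*ε := by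
      have m1 : (2*ε)⁻¹ ≤ Real.sqrt m := by
        have m2 : Real.sqrt ((2*ε)⁻¹^2) ≤ Real.sqrt m := Real.sqrt_le_sqrt hmlo
        rwa [Real.sqrt_sq (by positivity : (0:ℝ) ≤ (2*ε)⁻¹)] at m2
      have m3 : (Real.sqrt m)⁻¹ ≤ ((2*ε)⁻¹)⁻¹ :=
        inv_anti₀ (by positivity) m1
      rw [inv_inv] at m3
      have m4 : (m:ℝ) ^ (-(1/2:ℝ)) = (Real.sqrt m)⁻¹ := by
        rw [Real.sqrt_eq_rpow, ← Real.rpow_neg (by positivity : (0:ℝ) ≤ (m:ℝ))]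
      rw [m4]
      exact m3
    have hm5 : (m:ℝ) ^ (-(γ/2)) ≤ 2 * ε ^ γ := by
      have m6 : (m:ℝ) ^ (-(γ/2)) = ((m:ℝ) ^ (-(1/2:ℝ))) ^ γ := by
        rw [← Real.rpow_mul (le_of_lt hmR)]
        congr 1
        ring
      have m7 : ((m:ℝ) ^ (-(1/2:ℝ))) ^ γ ≤ (2*ε) ^ γ :=
        Real.rpow_le_rpow (Real.rpow_nonneg hmR.le _) hm12 hγ0.le
      have m8 : (2*ε) ^ γ = 2^γ * ε^γ := Real.mul_rpow (by norm_num) hε0.le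
      have m9 : (2:ℝ)^γ ≤ 2 := by
        calc (2:ℝ)^γ ≤ (2:ℝ)^(1:ℝ) :=
            Real.rpow_le_rpow_of_exponent_le (by norm_num) hγ1
        _ = 2 := Real.rpow_one 2
      have m10 : 2^γ * ε^γ ≤ 2 * ε^γ := mul_le_mul_of_nonneg_right m9 hεγ0.le
      rw [m6]
      calc ((m:ℝ) ^ (-(1/2:ℝ))) ^ γ ≤ (2*ε) ^ γ := m7
      _ = 2^γ * ε^γ := m8
      _ ≤ 2 * ε^γ := m10
    calc ‖f m‖ ≤ C₂ * (m:ℝ) ^ (-(γ/2)) := hnorm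
    _ ≤ C₂ * (2 * ε ^ γ) := mul_le_mul_of_nonneg_left hm5 hC₂.le
    _ = (2*C₂) * ε ^ γ := by ring
    _ ≤ (1/(1-h) + 2*C₂) * ε ^ γ := by
        apply mul_le_mul_of_nonneg_right _ hεγ0.le
        have h31 : 0 < 1/(1-h) := div_pos one_pos (by linarith only [hh1])
        linarith only [h31]
  · -- bad case
    push_neg at hgood
    obtain ⟨k, hkm, hk⟩ := hgood
    have h1 : ‖f m‖ ≤ ‖f k‖ := by
      rw [← hsqrt m, ← hsqrt k]
      exact Real.sqrt_le_sqrt (hamono k m hkm)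
    have h1h : (0:ℝ) < 1 - h := by linarith
    have h2 : ‖f k‖ < ε / (1 - h) := by
      rw [← hsqrt k, lt_div_iff₀ h1h]
      linarith only [hk]
    calc ‖f m‖ ≤ ε / (1 - h) := by linarith only [h1, h2]
    _ ≤ ε ^ γ / (1 - h) := div_le_div_of_nonneg_right hεγ h1h.le
    _ = (1/(1-h)) * ε ^ γ := by ring
    _ ≤ (1/(1-h) + 2*C₂) * ε ^ γ := by
        apply mul_le_mul_of_nonneg_right _ hεγ0.le
        linarith only [hC₂]
end

section
/- Let H be a real Hilbert space and D ⊆ H a symmetric dictionary. Let f ∈ A₁(D) and let (f_m, φ_m) be a realization of the Orthogonal Greedy Algorithm applied to f, i.e. f_0 = f and for each m ≥ 1: φ_m ∈ D satisfies |⟨f_{m−1}, φ_m⟩| = sup_{g∈D} |⟨f_{m−1}, g⟩|, and f_m = f − P_{H_m}(f) where P_{H_m} is the orthogonal projection onto H_m := span(φ_1, …, φ_m). Then for every m ≥ 1, ‖f_m‖ ≤ m^{−1/2}. -/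
open scoped RealInnerProductSpace

/-- The orthogonal projection of `x` onto `H_m = span(φ_1, …, φ_m)`,
regarded as an element of `H`. -/
noncomputable def projSpan {H : Type*} [NormedAddCommGroup H] [InnerProductSpace ℝ H]
    [CompleteSpace H] (φ : ℕ → H) (m : ℕ) (x : H) : H :=
  haveI : FiniteDimensional ℝ (Submodule.span ℝ (φ '' Set.Icc 1 m)) :=
    FiniteDimensional.span_of_finite ℝ ((Set.finite_Icc 1 m).image φ)
  (Submodule.orthogonalProjectionOnto (Submodule.span ℝ (φ '' Set.Icc 1 m)) x : H)

/-- Rate of convergence of the Orthogonal Greedy Algorithm on `A₁(D)`: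
for `f ∈ A₁(D)`, the OGA residuals satisfy `‖f_m‖ ≤ m^{-1/2}` for every `m ≥ 1`. -/
theorem stmt_6 {H : Type*} [NormedAddCommGroup H] [InnerProductSpace ℝ H] [CompleteSpace H]
    (D : Set H)
    (hDnorm : ∀ g ∈ D, ‖g‖ = 1) (hDsymm : ∀ g ∈ D, -g ∈ D)
    (hDspan : (Submodule.span ℝ D).topologicalClosure = ⊤)
    (f : ℕ → H) (φ : ℕ → H)
    (hf0 : f 0 ∈ A1 D)
    (hφD : ∀ m : ℕ, φ (m + 1) ∈ D)
    (hgreedy : ∀ m : ℕ,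
      |⟪f m, φ (m + 1)⟫| = sSup {r : ℝ | ∃ g ∈ D, r = |⟪f m, g⟫|})
    (hproj : ∀ m : ℕ, 1 ≤ m → f m = f 0 - projSpan φ m (f 0)) :
    ∀ m : ℕ, 1 ≤ m → ‖f m‖ ≤ (m : ℝ) ^ (-(1/2) : ℝ) := by
  haveI : ∀ m : ℕ, FiniteDimensional ℝ (Submodule.span ℝ (φ '' Set.Icc 1 m)) :=
    fun m => FiniteDimensional.span_of_finite ℝ ((Set.finite_Icc 1 m).image φ)
  set K : ℕ → Submodule ℝ H := fun m => Submodule.span ℝ (φ '' Set.Icc 1 m) with hK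
  set F : ℕ → H := fun m => f 0 - (Submodule.orthogonalProjectionOnto (K m) (f 0) : H) with hF
  have hFproj : ∀ m : ℕ, F m = f 0 - projSpan φ m (f 0) := fun m => rfl
  -- F agrees with f
  have hK0 : K 0 = ⊥ := by
    simp [hK, Set.Icc_eq_empty (by norm_num : ¬ (1:ℕ) ≤ 0)]
  have hF0 : F 0 = f 0 := by
    have h1 : (Submodule.orthogonalProjectionOnto (K 0) (f 0) : H) = 0 :=
      (Submodule.mem_bot ℝ).mp (hK0 ▸ SetLike.coe_mem _)
    show f 0 - (Submodule.orthogonalProjectionOnto (K 0) (f 0) : H) = f 0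
    rw [h1, sub_zero]
  have hFf : ∀ m : ℕ, F m = f m := by
    intro m
    rcases Nat.eq_zero_or_pos m with h | h
    · rw [h, hF0]
    · rw [hproj m h, hFproj]
  -- D nonempty
  have hDne : D.Nonempty := by
    by_contra h
    rw [Set.not_nonempty_iff_eq_empty] at h
    rw [A1, h, convexHull_empty, closure_empty] at hf0
    exact hf0
  -- bound on inner products with A1 elements
  have hA1le : ∀ x : H, ∀ y ∈ A1 D, ⟪x, y⟫ ≤ sSup {r : ℝ | ∃ g ∈ D, r = |⟪x, g⟫|} := by
    intro x y hy
    set S := sSup {r : ℝ | ∃ g ∈ D, r = |⟪x, g⟫|} with hS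
    have hbdd : BddAbove {r : ℝ | ∃ g ∈ D, r = |⟪x, g⟫|} := by
      refine ⟨‖x‖, fun r hr => ?_⟩
      obtain ⟨g, hg, rfl⟩ := hr
      calc |⟪x, g⟫| ≤ ‖x‖ * ‖g‖ := abs_real_inner_le_norm x g
        _ = ‖x‖ := by rw [hDnorm g hg, mul_one]
    have hsub : D ⊆ {y : H | ⟪x, y⟫ ≤ S} := by
      intro g hg
      have : |⟪x, g⟫| ≤ S := le_csSup hbdd ⟨g, hg, rfl⟩
      exact le_trans (le_abs_self _) this
    have hcl : IsClosed {y : H | ⟪x, y⟫ ≤ S} :=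
      isClosed_le (Continuous.inner continuous_const continuous_id) continuous_const
    have hcv : Convex ℝ {y : H | ⟪x, y⟫ ≤ S} := by
      intro a ha b hb s t hs ht hst
      simp only [Set.mem_setOf_eq] at ha hb ⊢
      rw [inner_add_right, real_inner_smul_right, real_inner_smul_right]
      calc s * ⟪x, a⟫ + t * ⟪x, b⟫ ≤ s * S + t * S :=
            add_le_add (mul_le_mul_of_nonneg_left ha hs) (mul_le_mul_of_nonneg_left hb ht)
        _ = S := by rw [← add_mul, hst, one_mul]
    exact closure_minimal (convexHull_min hsub hcv) hcl hy
  -- orthogonality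
  have hperp : ∀ m : ℕ, F m ∈ (K m)ᗮ := fun m => Submodule.sub_starProjection_mem_orthogonal (K := K m) (f 0)
  have hnormsq : ∀ m : ℕ, ‖F m‖ ^ 2 = ⟪F m, f 0⟫ := by
    intro m
    have h0 : ⟪(Submodule.orthogonalProjectionOnto (K m) (f 0) : H), F m⟫ = 0 :=
      (Submodule.mem_orthogonal (K m) (F m)).mp (hperp m) _ (SetLike.coe_mem _)
    have : ⟪F m, f 0⟫ = ⟪F m, F m⟫ + ⟪F m, (Submodule.orthogonalProjectionOnto (K m) (f 0) : H)⟫ := by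
      rw [← inner_add_right]
      congr 1
      simp [hF]
    have h0' : ⟪F m, (Submodule.orthogonalProjectionOnto (K m) (f 0) : H)⟫ = 0 := by
      rw [real_inner_comm]; exact h0
    rw [this, h0', add_zero, real_inner_self_eq_norm_sq]
  -- key greedy inequality
  have hkey : ∀ m : ℕ, ‖F m‖ ^ 2 ≤ |⟪F m, φ (m + 1)⟫| := by
    intro m
    calc ‖F m‖ ^ 2 = ⟪F m, f 0⟫ := hnormsq m
      _ ≤ sSup {r : ℝ | ∃ g ∈ D, r = |⟪F m, g⟫|} := hA1le (F m) (f 0) hf0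
      _ = |⟪F m, φ (m + 1)⟫| := by rw [hFf m]; exact (hgreedy m).symm
  -- recursion step
  have hstep : ∀ m : ℕ, ‖F (m + 1)‖ ^ 2 ≤ ‖F m‖ ^ 2 - ⟪F m, φ (m + 1)⟫ ^ 2 := by
    intro m
    set c := ⟪F m, φ (m + 1)⟫ with hc
    set v : H := (Submodule.orthogonalProjectionOnto (K m) (f 0) : H) + c • φ (m + 1) with hv
    have hKle : K m ≤ K (m + 1) :=
      Submodule.span_mono (Set.image_mono (f := φ) (Set.Icc_subset_Icc_right (Nat.le_succ m)))
    have hφmem : φ (m + 1) ∈ K (m + 1) :=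
      Submodule.subset_span ⟨m + 1, ⟨Nat.le_add_left 1 m, le_refl _⟩, rfl⟩
    have hvmem : v ∈ K (m + 1) :=
      Submodule.add_mem _ (hKle (SetLike.coe_mem _)) (Submodule.smul_mem _ c hφmem)
    -- minimality of orthogonal projection via Pythagoras
    have hmin : ‖F (m + 1)‖ ^ 2 ≤ ‖f 0 - v‖ ^ 2 := by
      have hdecomp : f 0 - v = F (m + 1) + ((Submodule.orthogonalProjectionOnto (K (m+1)) (f 0) : H) - v) := by
        simp [hF]
      have hmemK : (Submodule.orthogonalProjectionOnto (K (m+1)) (f 0) : H) - v ∈ K (m + 1) :=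
        Submodule.sub_mem _ (SetLike.coe_mem _) hvmem
      have hz : ⟪F (m + 1), (Submodule.orthogonalProjectionOnto (K (m+1)) (f 0) : H) - v⟫ = 0 := by
        have := (Submodule.mem_orthogonal (K (m+1)) (F (m+1))).mp (hperp (m+1)) _ hmemK
        rw [real_inner_comm] at this; exact this
      rw [hdecomp, norm_add_sq_real, hz]
      nlinarith [sq_nonneg ‖(Submodule.orthogonalProjectionOnto (K (m+1)) (f 0) : H) - v‖]
    have heq : ‖f 0 - v‖ ^ 2 = ‖F m‖ ^ 2 - c ^ 2 := by
      have h1 : f 0 - v = F m - c • φ (m + 1) := by simp only [hF, hv]; abel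
      rw [h1, norm_sub_sq_real, real_inner_smul_right, norm_smul, hDnorm _ (hφD m)]
      simp only [Real.norm_eq_abs, mul_one, ← hc, sq_abs]
      ring
    rw [heq] at hmin; exact hmin
  -- a_{m+1} ≤ a_m - a_m^2
  have hrec : ∀ m : ℕ, ‖F (m + 1)‖ ^ 2 ≤ ‖F m‖ ^ 2 - (‖F m‖ ^ 2) ^ 2 := by
    intro m
    have h1 := hkey m
    have h2 := hstep m
    have h3 : (‖F m‖ ^ 2) ^ 2 ≤ ⟪F m, φ (m + 1)⟫ ^ 2 := by
      have := sq_nonneg (‖F m‖ ^ 2)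
      nlinarith [sq_abs (⟪F m, φ (m + 1)⟫), sq_nonneg ‖F m‖]
    linarith
  -- norm of f 0 at most 1
  have hf0norm : ‖f 0‖ ≤ 1 := by
    have : A1 D ⊆ Metric.closedBall (0 : H) 1 := by
      apply closure_minimal _ Metric.isClosed_closedBall
      apply convexHull_min _ (convex_closedBall _ _)
      intro g hg
      simp [Metric.mem_closedBall, dist_eq_norm, hDnorm g hg]
    simpa [Metric.mem_closedBall, dist_eq_norm] using this hf0
  -- induction: a m ≤ 1/m
  have hbound : ∀ m : ℕ, 1 ≤ m → ‖F m‖ ^ 2 ≤ 1 / (m : ℝ) := by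
    intro m hm
    induction m with
    | zero => omega
    | succ n ih =>
      rcases Nat.eq_zero_or_pos n with h | h
      · subst h
        have h1 := hrec 0
        have h2 : ‖F 0‖ ^ 2 ≤ 1 := by
          rw [hF0]; nlinarith [norm_nonneg (f 0)]
        have h3 : (0:ℝ) ≤ ‖F 0‖ ^ 2 := sq_nonneg _
        push_cast
        nlinarith
      · have ih' := ih h
        have h1 := hrec n
        have h2 : (0:ℝ) ≤ ‖F n‖ ^ 2 := sq_nonneg _
        have hn : (1:ℝ) ≤ (n:ℝ) := by exact_mod_cast h
        have hnpos : (0:ℝ) < (n:ℝ) := by linarith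
        rw [le_div_iff₀ hnpos] at ih'
        rw [show ((n+1:ℕ):ℝ) = (n:ℝ)+1 by push_cast; ring,
          le_div_iff₀ (by linarith : (0:ℝ) < (n:ℝ) + 1)]
        have ha1 : ‖F n‖ ^ 2 ≤ 1 := by nlinarith [mul_le_mul_of_nonneg_left hn h2]
        nlinarith [mul_nonneg (sub_nonneg.mpr ha1) (sub_nonneg.mpr ih'),
          sq_nonneg (‖F n‖ ^ 2)]
  -- conclude
  intro m hm
  rw [← hFf m]
  have h1 := hbound m hm
  have hmpos : (0:ℝ) < (m:ℝ) := by exact_mod_cast hm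
  set b := (m : ℝ) ^ (-(1/2) : ℝ) with hb
  have hbpos : 0 < b := Real.rpow_pos_of_pos hmpos _
  have hb2 : b ^ 2 = 1 / (m : ℝ) := by
    rw [hb, ← Real.rpow_natCast ((m:ℝ) ^ (-(1/2):ℝ)) 2, ← Real.rpow_mul (le_of_lt hmpos)]
    norm_num [Real.rpow_neg_one]
  nlinarith [norm_nonneg (F m), sq_nonneg (‖F m‖ - b)]
end

section
/- Let H = ℝ² with the Euclidean inner product, let e₁ = (1,0), e₂ = (0,1), and let D = {e₁, −e₁, e₂, −e₂}. Fix ε > 0 and set v₁ := (1+ε, 1) and v₂ := (1, 1+ε). Then: (i) e₁ is the unique element of D maximizing g ↦ ⟨v₁, g⟩ over D and the Pure Greedy Algorithm residual after one iteration is v₁ − ⟨v₁, e₁⟩e₁ = e₂; (ii) e₂ is the unique element of D maximizing g ↦ ⟨v₂, g⟩ over D and the residual after one iteration is v₂ − ⟨v₂, e₂⟩e₂ = e₁; (iii) the residuals satisfy ‖e₂ − e₁‖ = √2 while ‖v₁ − v₂‖ = ε√2. In particular, for small ε the PGA residual map changes the distance between inputs by the factor 1/ε. -/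
open scoped RealInnerProductSpace

/-!
Everything depends only on `e₁, e₂` being orthonormal. In coordinates `v = a e₁ + b e₂` the
inner products with `±e₁, ±e₂` are `±a, ±b`, so `e₁` is the unique greedy choice as soon as
`|b| < a`, and the residual `v - a e₁` is `b e₂`. The inputs `(1+ε, 1)` and `(1, 1+ε)` lie on
either side of the diagonal, where the greedy choice jumps, so their residuals `e₂` and `e₁` stay
`√2` apart while the inputs are only `ε √2` apart.
-/

section GreedyStep

variable {E : Type*} [NormedAddCommGroup E] [InnerProductSpace ℝ E]

def IsUniqueGreedyChoice (D : Set E) (v g : E) : Prop :=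
  g ∈ D ∧ ∀ h ∈ D, h ≠ g → ⟪v, h⟫ < ⟪v, g⟫

variable {e₁ e₂ : E}

lemma inner_smul_add_smul_left_of_orthonormal (h₁ : ‖e₁‖ = 1) (h₂₁ : ⟪e₂, e₁⟫ = 0) (a b : ℝ) :
    ⟪a • e₁ + b • e₂, e₁⟫ = a := by
  rw [inner_add_left, real_inner_smul_left, real_inner_smul_left, real_inner_self_eq_norm_sq, h₁,
    h₂₁]
  ring

lemma sub_inner_smul_eq_of_orthonormal (h₁ : ‖e₁‖ = 1) (h₂₁ : ⟪e₂, e₁⟫ = 0) {v : E} {a b : ℝ}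
    (hv : v = a • e₁ + b • e₂) : v - ⟪v, e₁⟫ • e₁ = b • e₂ := by
  rw [hv, inner_smul_add_smul_left_of_orthonormal h₁ h₂₁]
  abel

lemma isUniqueGreedyChoice_of_abs_lt (h₁ : ‖e₁‖ = 1) (h₂ : ‖e₂‖ = 1) (h₁₂ : ⟪e₁, e₂⟫ = 0)
    {v : E} {a b : ℝ} (hv : v = a • e₁ + b • e₂) (hab : |b| < a) :
    IsUniqueGreedyChoice {e₁, -e₁, e₂, -e₂} v e₁ := by
  have hv₁ : ⟪v, e₁⟫ = a := by
    rw [hv, inner_smul_add_smul_left_of_orthonormal h₁ (by rwa [real_inner_comm])]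
  have hv₂ : ⟪v, e₂⟫ = b := by
    rw [hv, add_comm, inner_smul_add_smul_left_of_orthonormal h₂ h₁₂]
  refine ⟨Set.mem_insert _ _, ?_⟩
  rintro g (rfl | rfl | rfl | rfl) hne
  · exact absurd rfl hne
  all_goals
    simp only [inner_neg_right, hv₁, hv₂]
    linarith [le_abs_self b, neg_abs_le b]

lemma norm_sub_of_orthonormal (h₁ : ‖e₁‖ = 1) (h₂ : ‖e₂‖ = 1) (h₁₂ : ⟪e₁, e₂⟫ = 0) :
    ‖e₁ - e₂‖ = Real.sqrt 2 := by
  have hsq := norm_sub_sq_eq_norm_sq_add_norm_sq_real h₁₂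
  rw [h₁, h₂] at hsq
  rw [← Real.sqrt_sq (norm_nonneg _), sq, hsq]
  norm_num

end GreedyStep

/-- Instability of the Pure Greedy Algorithm in the wide sense: in `ℝ²` with the
dictionary `D = {±e₁, ±e₂}`, for the inputs `v₁ = (1+ε)e₁ + e₂` and
`v₂ = e₁ + (1+ε)e₂` the PGA picks `e₁` (resp. `e₂`) as the unique maximizer and
produces residuals `e₂` (resp. `e₁`), so `‖e₂ - e₁‖ = √2` while `‖v₁ - v₂‖ = ε√2`. -/
theorem stmt_7 (ε : ℝ) (hε : 0 < ε)
    (e₁ e₂ v₁ v₂ : EuclideanSpace ℝ (Fin 2))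
    (he₁ : e₁ = EuclideanSpace.single 0 1)
    (he₂ : e₂ = EuclideanSpace.single 1 1)
    (D : Set (EuclideanSpace ℝ (Fin 2))) (hD : D = {e₁, -e₁, e₂, -e₂})
    (hv₁ : v₁ = (1 + ε) • e₁ + e₂) (hv₂ : v₂ = e₁ + (1 + ε) • e₂) :
    (e₁ ∈ D ∧ (∀ g ∈ D, g ≠ e₁ → ⟪v₁, g⟫ < ⟪v₁, e₁⟫) ∧ v₁ - ⟪v₁, e₁⟫ • e₁ = e₂) ∧
    (e₂ ∈ D ∧ (∀ g ∈ D, g ≠ e₂ → ⟪v₂, g⟫ < ⟪v₂, e₂⟫) ∧ v₂ - ⟪v₂, e₂⟫ • e₂ = e₁) ∧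
    ‖e₂ - e₁‖ = Real.sqrt 2 ∧ ‖v₁ - v₂‖ = ε * Real.sqrt 2 := by
  have h₁ : ‖e₁‖ = 1 := by simp [he₁]
  have h₂ : ‖e₂‖ = 1 := by simp [he₂]
  have h₁₂ : ⟪e₁, e₂⟫ = 0 := by simp [he₁, he₂, EuclideanSpace.inner_single_left]
  have h₂₁ : ⟪e₂, e₁⟫ = 0 := by rwa [real_inner_comm]
  have hv₁' : v₁ = (1 + ε) • e₁ + (1 : ℝ) • e₂ := by rw [hv₁, one_smul]
  have hv₂' : v₂ = (1 + ε) • e₂ + (1 : ℝ) • e₁ := by rw [hv₂, one_smul, add_comm]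
  have hgap : |(1 : ℝ)| < 1 + ε := by rw [abs_one]; linarith
  have hD' : D = {e₂, -e₂, e₁, -e₁} := by
    ext g
    simp only [hD, Set.mem_insert_iff, Set.mem_singleton_iff]
    tauto
  obtain ⟨hmem₁, hmax₁⟩ := hD ▸ isUniqueGreedyChoice_of_abs_lt h₁ h₂ h₁₂ hv₁' hgap
  obtain ⟨hmem₂, hmax₂⟩ := hD' ▸ isUniqueGreedyChoice_of_abs_lt h₂ h₁ h₂₁ hv₂' hgap
  have hdiff : v₁ - v₂ = ε • (e₁ - e₂) := by rw [hv₁, hv₂]; module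
  refine ⟨⟨hmem₁, hmax₁, ?_⟩, ⟨hmem₂, hmax₂, ?_⟩, norm_sub_of_orthonormal h₂ h₁ h₂₁, ?_⟩
  · simpa using sub_inner_smul_eq_of_orthonormal h₁ h₂₁ hv₁'
  · simpa using sub_inner_smul_eq_of_orthonormal h₂ h₁₂ hv₂'
  · rw [hdiff, norm_smul, Real.norm_of_nonneg hε.le, norm_sub_of_orthonormal h₁ h₂ h₁₂]
end

section
/- Let H be a real Hilbert space and D ⊆ H a symmetric dictionary. Let ε ≥ 0, h ∈ (0,1), and let f, u ∈ H with u ≠ 0, ‖f − u‖ ≤ ε, ‖u‖_{A₁(D)} finite, and (1−h)‖f‖ ≥ ε. Then sup_{g∈D} ⟨f, g⟩ ≥ h‖f‖² / ‖u‖_{A₁(D)}. -/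
/-!
Every element of `A₁(D)` pairs with `f` to at most `s := sup_{g ∈ D} ⟪f, g⟫`, since the half-space
`{x | ⟪f, x⟫ ≤ s}` is closed, convex and contains `D`. Applying this to `u / M` for every admissible
`M` gives `⟪f, u⟫ ≤ ‖u‖_{A₁(D)} · s`. On the other hand the noise bound gives
`⟪f, u⟫ = ‖f‖² - ⟪f, f - u⟫ ≥ ‖f‖² - (1 - h)‖f‖² = h‖f‖²`. As this is `≥ 0`, so is `s`, which
makes the final division harmless even if `‖u‖_{A₁(D)} = 0` (where `x / 0 = 0`).
-/

open scoped RealInnerProductSpace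

/-- The `A₁(D)`-norm of `u`: `inf {M > 0 : u/M ∈ A₁(D)}`. -/
noncomputable def A1norm {H : Type*} [NormedAddCommGroup H] [InnerProductSpace ℝ H]
    (D : Set H) (u : H) : ℝ :=
  sInf {M : ℝ | 0 < M ∧ M⁻¹ • u ∈ A1 D}

section A1

variable {H : Type*} [NormedAddCommGroup H] [InnerProductSpace ℝ H] {D : Set H}

theorem A1norm_nonneg (u : H) : 0 ≤ A1norm D u :=
  Real.sInf_nonneg fun _ hM => hM.1.le

theorem inner_le_of_mem_A1 {f x : H} {c : ℝ} (hc : ∀ g ∈ D, ⟪f, g⟫ ≤ c) (hx : x ∈ A1 D) :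
    ⟪f, x⟫ ≤ c :=
  closure_minimal (convexHull_min hc (convex_halfSpace_le (innerₛₗ ℝ f).isLinear c))
    (isClosed_le (innerSL ℝ f).continuous continuous_const) hx

theorem inner_le_mul_of_inv_smul_mem_A1 {f u : H} {c M : ℝ} (hc : ∀ g ∈ D, ⟪f, g⟫ ≤ c)
    (hM : 0 < M) (hu : M⁻¹ • u ∈ A1 D) : ⟪f, u⟫ ≤ M * c := by
  have := inner_le_of_mem_A1 hc hu
  rwa [real_inner_smul_right, inv_mul_le_iff₀ hM] at this

open scoped Pointwise in
theorem inner_le_mul_A1norm {f u : H} {c : ℝ} (hc : ∀ g ∈ D, ⟪f, g⟫ ≤ c) (hc₀ : 0 ≤ c)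
    (hfin : ∃ M : ℝ, 0 < M ∧ M⁻¹ • u ∈ A1 D) : ⟪f, u⟫ ≤ c * A1norm D u := by
  calc ⟪f, u⟫ ≤ sInf (c • {M : ℝ | 0 < M ∧ M⁻¹ • u ∈ A1 D}) := by
        refine le_csInf (Set.Nonempty.smul_set hfin) ?_
        rintro _ ⟨M, ⟨hM, hMu⟩, rfl⟩
        simpa only [smul_eq_mul, mul_comm] using inner_le_mul_of_inv_smul_mem_A1 hc hM hMu
    _ = c * A1norm D u := by rw [Real.sInf_smul_of_nonneg hc₀, smul_eq_mul, A1norm]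

theorem bddAbove_inner_of_norm_le_one (hD : ∀ g ∈ D, ‖g‖ ≤ 1) (f : H) :
    BddAbove {r : ℝ | ∃ g ∈ D, r = ⟪f, g⟫} := by
  refine ⟨‖f‖, ?_⟩
  rintro _ ⟨g, hg, rfl⟩
  calc ⟪f, g⟫ ≤ ‖f‖ * ‖g‖ := real_inner_le_norm f g
    _ ≤ ‖f‖ := mul_le_of_le_one_right (norm_nonneg f) (hD g hg)

theorem mul_norm_sq_le_inner_of_norm_sub_le {f u : H} {h : ℝ} (hfu : ‖f - u‖ ≤ (1 - h) * ‖f‖) :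
    h * ‖f‖ ^ 2 ≤ ⟪f, u⟫ := by
  have hsplit : ⟪f, u⟫ = ‖f‖ ^ 2 - ⟪f, f - u⟫ := by
    rw [inner_sub_right, real_inner_self_eq_norm_sq]; ring
  have hcs : ⟪f, f - u⟫ ≤ ‖f‖ * ((1 - h) * ‖f‖) :=
    (real_inner_le_norm f (f - u)).trans (mul_le_mul_of_nonneg_left hfu (norm_nonneg f))
  linarith

end A1

theorem stmt_11_general {H : Type*} [NormedAddCommGroup H] [InnerProductSpace ℝ H]
    (D : Set H)
    (hDnorm : ∀ g ∈ D, ‖g‖ = 1)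
    (ε : ℝ) (h : ℝ) (hh : h ∈ Set.Ioo (0:ℝ) 1)
    (f u : H) (hnoise : ‖f - u‖ ≤ ε)
    (hfin : ∃ M : ℝ, 0 < M ∧ M⁻¹ • u ∈ A1 D)
    (hbig : ε ≤ (1 - h) * ‖f‖) :
    sSup {r : ℝ | ∃ g ∈ D, r = ⟪f, g⟫} ≥ h * ‖f‖ ^ 2 / A1norm D u := by
  set s := sSup {r : ℝ | ∃ g ∈ D, r = ⟪f, g⟫}
  have hbdd := bddAbove_inner_of_norm_le_one (fun g hg => (hDnorm g hg).le) f
  have hs : ∀ g ∈ D, ⟪f, g⟫ ≤ s := fun g hg => le_csSup hbdd ⟨g, hg, rfl⟩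
  have hfu : h * ‖f‖ ^ 2 ≤ ⟪f, u⟫ := mul_norm_sq_le_inner_of_norm_sub_le (hnoise.trans hbig)
  have hs₀ : 0 ≤ s := by
    obtain ⟨M, hM, hMu⟩ := hfin
    have hfu₀ : 0 ≤ ⟪f, u⟫ := (mul_nonneg hh.1.le (sq_nonneg ‖f‖)).trans hfu
    exact nonneg_of_mul_nonneg_right (hfu₀.trans (inner_le_mul_of_inv_smul_mem_A1 hs hM hMu)) hM
  exact div_le_of_le_mul₀ (A1norm_nonneg u) hs₀ (hfu.trans (inner_le_mul_A1norm hs hs₀ hfin))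

/-- Lower bound for the greedy step in the presence of noise: if `‖f - u‖ ≤ ε`,
`u ≠ 0` has finite `A₁(D)`-norm, and `(1-h)‖f‖ ≥ ε`, then
`sup_{g ∈ D} ⟪f, g⟫ ≥ h‖f‖² / ‖u‖_{A₁(D)}`. -/
theorem stmt_11 {H : Type*} [NormedAddCommGroup H] [InnerProductSpace ℝ H] [CompleteSpace H]
    (D : Set H)
    (hDnorm : ∀ g ∈ D, ‖g‖ = 1) (hDsymm : ∀ g ∈ D, -g ∈ D)
    (hDspan : (Submodule.span ℝ D).topologicalClosure = ⊤)
    (ε : ℝ) (hε : 0 ≤ ε) (h : ℝ) (hh : h ∈ Set.Ioo (0:ℝ) 1)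
    (f u : H) (hu : u ≠ 0) (hnoise : ‖f - u‖ ≤ ε)
    (hfin : ∃ M : ℝ, 0 < M ∧ M⁻¹ • u ∈ A1 D)
    (hbig : ε ≤ (1 - h) * ‖f‖) :
    sSup {r : ℝ | ∃ g ∈ D, r = ⟪f, g⟫} ≥ h * ‖f‖ ^ 2 / A1norm D u :=
  stmt_11_general D hDnorm ε h hh f u hnoise hfin hbig
end

section
/- Let H be a real Hilbert space, D ⊆ H a symmetric dictionary, b ∈ (0,1], ε ∈ (0,1], B > 0, and τ = {t_k} with t_k ∈ (0,1]. Suppose f, f^ε ∈ H satisfy ‖f − f^ε‖ ≤ ε and f^ε/B ∈ A₁(D). Let (f_m, φ_m) be a realization of the Weak Greedy Algorithm WGA(τ,b) applied to f, and define the comparison sequence f^ε_0 := f^ε, f^ε_k := f^ε_{k−1} − b⟨f^ε_{k−1}, φ_k⟩φ_k for k ≥ 1. Then for every integer k with 1 ≤ k ≤ ε^{−2}, ‖f^ε_k‖_{A₁(D)} ≤ B + 1 + b·Σ_{j=1}^k ⟨f_{j−1}, φ_j⟩. -/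
open scoped RealInnerProductSpace

/-- Control of the `A₁(D)`-norm of the comparison sequence
`f^ε_k = f^ε_{k-1} - b⟪f_{k-1}, φ_k⟫φ_k` built from a realization `(f_m, φ_m)` of the
WGA(τ,b) applied to the noisy signal `f`: for `1 ≤ k ≤ ε⁻²`,
`‖f^ε_k‖_{A₁(D)} ≤ B + 1 + b Σ_{j=1}^k ⟪f_{j-1}, φ_j⟫`. -/
theorem stmt_12 {H : Type*} [NormedAddCommGroup H] [InnerProductSpace ℝ H] [CompleteSpace H]
    (D : Set H)
    (hDnorm : ∀ g ∈ D, ‖g‖ = 1) (hDsymm : ∀ g ∈ D, -g ∈ D)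
    (hDspan : (Submodule.span ℝ D).topologicalClosure = ⊤)
    (b : ℝ) (hb : b ∈ Set.Ioc (0:ℝ) 1)
    (τ : ℕ → ℝ) (hτ : ∀ k ≥ 1, τ k ∈ Set.Ioc (0:ℝ) 1)
    (ε : ℝ) (hε : ε ∈ Set.Ioc (0:ℝ) 1) (B : ℝ) (hB : 0 < B)
    (f₀ fε₀ : H) (hnoise : ‖f₀ - fε₀‖ ≤ ε) (hfε : B⁻¹ • fε₀ ∈ A1 D)
    (f : ℕ → H) (φ : ℕ → H)
    (hf0 : f 0 = f₀)
    (hφD : ∀ m : ℕ, φ (m + 1) ∈ D)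
    (hgreedy : ∀ m : ℕ,
      ⟪f m, φ (m + 1)⟫ ≥ τ (m + 1) * sSup {r : ℝ | ∃ g ∈ D, r = ⟪f m, g⟫})
    (hrec : ∀ m : ℕ, f (m + 1) = f m - (b * ⟪f m, φ (m + 1)⟫) • φ (m + 1))
    (fε : ℕ → H)
    (hfε0 : fε 0 = fε₀)
    (hfεrec : ∀ k : ℕ, fε (k + 1) = fε k - (b * ⟪fε k, φ (k + 1)⟫) • φ (k + 1)) :
    ∀ k : ℕ, 1 ≤ k → (k : ℝ) ≤ ε⁻¹ ^ 2 →
      A1norm D (fε k) ≤ B + 1 + b * ∑ j ∈ Finset.range k, ⟪f j, φ (j + 1)⟫ := by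
  obtain ⟨hb0, hb1⟩ := hb
  obtain ⟨hε0, hε1⟩ := hε
  set a : ℕ → ℝ := fun j => ⟪f j, φ (j + 1)⟫ with ha
  set c : ℕ → ℝ := fun j => ⟪fε j, φ (j + 1)⟫ with hc
  have hφ1 : φ 1 ∈ D := hφD 0
  -- the greedy inner products are nonnegative
  have haj : ∀ m, 0 ≤ a m := by
    intro m
    have hbdd : BddAbove {r : ℝ | ∃ g ∈ D, r = ⟪f m, g⟫} := by
      refine ⟨‖f m‖, ?_⟩
      rintro r ⟨g, hg, rfl⟩
      calc ⟪f m, g⟫ ≤ ‖f m‖ * ‖g‖ := real_inner_le_norm _ _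
        _ = ‖f m‖ := by rw [hDnorm g hg, mul_one]
    have h1 : ⟪f m, φ 1⟫ ≤ sSup {r : ℝ | ∃ g ∈ D, r = ⟪f m, g⟫} :=
      le_csSup hbdd ⟨φ 1, hφ1, rfl⟩
    have h2 : -⟪f m, φ 1⟫ ≤ sSup {r : ℝ | ∃ g ∈ D, r = ⟪f m, g⟫} :=
      le_csSup hbdd ⟨-φ 1, hDsymm _ hφ1, by rw [inner_neg_right]⟩
    have hsup : 0 ≤ sSup {r : ℝ | ∃ g ∈ D, r = ⟪f m, g⟫} := by linarith
    have hg := hgreedy m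
    have hτm := hτ (m + 1) (by omega)
    have : 0 ≤ τ (m + 1) * sSup {r : ℝ | ∃ g ∈ D, r = ⟪f m, g⟫} :=
      mul_nonneg hτm.1.le hsup
    simpa [ha] using le_trans this hg
  -- basic properties of A1 D
  have hA1conv : Convex ℝ (A1 D) := (convex_convexHull ℝ D).closure
  have hDA1 : ∀ g ∈ D, g ∈ A1 D := fun g hg => subset_closure (subset_convexHull ℝ D hg)
  have h0A1 : (0 : H) ∈ A1 D := by
    have h := hA1conv (hDA1 _ hφ1) (hDA1 _ (hDsymm _ hφ1))
      (by norm_num : (0:ℝ) ≤ 1/2) (by norm_num : (0:ℝ) ≤ 1/2) (by norm_num)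
    simpa using h
  -- membership lemma
  have hmem : ∀ k M, B + ∑ j ∈ Finset.range k, b * |c j| ≤ M → M⁻¹ • fε k ∈ A1 D := by
    intro k
    induction k with
    | zero =>
      intro M hM
      simp only [Finset.range_zero, Finset.sum_empty, add_zero] at hM
      have hMpos : 0 < M := lt_of_lt_of_le hB hM
      have heq : M⁻¹ • fε 0 = (B / M) • (B⁻¹ • fε₀) + (1 - B / M) • (0 : H) := by
        rw [hfε0, smul_smul, smul_zero, add_zero]
        congr 1
        field_simp
      rw [heq]
      exact hA1conv hfε h0A1 (by positivity)
        (by rw [sub_nonneg]; exact div_le_one_of_le₀ hM hMpos.le) (by ring)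
    | succ k ih =>
      intro M hM
      rw [Finset.sum_range_succ] at hM
      have hsum_nonneg : 0 ≤ ∑ j ∈ Finset.range k, b * |c j| :=
        Finset.sum_nonneg fun j _ => by positivity
      have hck : 0 ≤ b * |c k| := by positivity
      set M' := M - b * |c k| with hM'
      have hM'ge : B + ∑ j ∈ Finset.range k, b * |c j| ≤ M' := by
        rw [hM']; linarith
      have hM'pos : 0 < M' := lt_of_lt_of_le (by linarith) hM'ge
      have hMpos : 0 < M := by rw [hM'] at hM'pos; linarith
      have ihm := ih M' hM'ge
      set h : H := if 0 ≤ c k then -φ (k + 1) else φ (k + 1) with hh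
      have hhA1 : h ∈ A1 D := by
        by_cases h0 : 0 ≤ c k
        · rw [hh, if_pos h0]; exact hDA1 _ (hDsymm _ (hφD k))
        · rw [hh, if_neg h0]; exact hDA1 _ (hφD k)
      have hterm : (b * |c k| / M) • h = -((M⁻¹ * (b * c k)) • φ (k + 1)) := by
        by_cases h0 : 0 ≤ c k
        · rw [hh, if_pos h0, abs_of_nonneg h0, smul_neg, ← neg_smul, ← neg_smul]
          congr 1
          field_simp
        · rw [hh, if_neg h0, abs_of_neg (lt_of_not_ge h0), ← neg_smul]
          congr 1
          field_simp
      have key : M⁻¹ • fε (k + 1) = (M' / M) • (M'⁻¹ • fε k) + (b * |c k| / M) • h := by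
        rw [smul_smul]
        have h1 : M' / M * M'⁻¹ = M⁻¹ := by
          field_simp
        rw [h1, hterm, hfεrec k, smul_sub, smul_smul, sub_eq_add_neg]
      rw [key]
      refine hA1conv ihm hhA1 (by positivity) (by positivity) ?_
      rw [← add_div, hM', sub_add_cancel]
      exact div_self hMpos.ne'
  -- the difference sequence
  set u : ℕ → H := fun j => f j - fε j with hu
  have hurec : ∀ j, u (j + 1) = u j - (b * ⟪u j, φ (j + 1)⟫) • φ (j + 1) := by
    intro j
    simp only [hu, hrec j, hfεrec j, inner_sub_left]
    rw [mul_sub, sub_smul]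
    abel
  have hnormsq : ∀ j, ‖u (j + 1)‖ ^ 2 = ‖u j‖ ^ 2 - b * (2 - b) * ⟪u j, φ (j + 1)⟫ ^ 2 := by
    intro j
    have hφn : ‖φ (j + 1)‖ = 1 := hDnorm _ (hφD j)
    rw [hurec j, norm_sub_sq_real, real_inner_smul_right, norm_smul, hφn, mul_one,
      Real.norm_eq_abs, sq_abs]
    ring
  have htel : ∀ k, ∑ j ∈ Finset.range k, b * (2 - b) * ⟪u j, φ (j + 1)⟫ ^ 2 ≤ ε ^ 2 := by
    intro k
    have h1 : ∀ k, ∑ j ∈ Finset.range k, b * (2 - b) * ⟪u j, φ (j + 1)⟫ ^ 2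
        = ‖u 0‖ ^ 2 - ‖u k‖ ^ 2 := by
      intro k
      induction k with
      | zero => simp
      | succ k ih => rw [Finset.sum_range_succ, ih, hnormsq k]; ring
    rw [h1]
    have hu0 : ‖u 0‖ ≤ ε := by
      simp only [hu]
      rw [hf0, hfε0]
      exact hnoise
    nlinarith [norm_nonneg (u k), norm_nonneg (u 0)]
  -- coefficient sum bound
  have hcoef : ∀ k : ℕ, (k : ℝ) ≤ ε⁻¹ ^ 2 →
      b * ∑ j ∈ Finset.range k, |c j| ≤ 1 + b * ∑ j ∈ Finset.range k, a j := by
    intro k hk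
    set S := ∑ j ∈ Finset.range k, |⟪u j, φ (j + 1)⟫| with hS
    set Q := ∑ j ∈ Finset.range k, ⟪u j, φ (j + 1)⟫ ^ 2 with hQdef
    have hS0 : 0 ≤ S := Finset.sum_nonneg fun j _ => abs_nonneg _
    have hQ0 : 0 ≤ Q := Finset.sum_nonneg fun j _ => sq_nonneg _
    have hCS : S ^ 2 ≤ (k : ℝ) * Q := by
      have h := sq_sum_le_card_mul_sum_sq (s := Finset.range k)
        (f := fun j => |⟪u j, φ (j + 1)⟫|)
      simp only [Finset.card_range] at h
      calc S ^ 2 ≤ (k : ℝ) * ∑ j ∈ Finset.range k, |⟪u j, φ (j + 1)⟫| ^ 2 := h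
        _ = (k : ℝ) * Q := by rw [hQdef]; congr 1; exact Finset.sum_congr rfl fun j _ => sq_abs _
    have hQb : b * (2 - b) * Q ≤ ε ^ 2 := by
      have := htel k
      rw [← Finset.mul_sum] at this
      exact this
    have hkε : (k : ℝ) * ε ^ 2 ≤ 1 := by
      have h1 : (0:ℝ) < ε ^ 2 := by positivity
      have h2 := mul_le_mul_of_nonneg_right hk h1.le
      rw [inv_pow] at h2
      rwa [inv_mul_cancel₀ (by positivity : (ε:ℝ)^2 ≠ 0)] at h2
    have hk0 : (0 : ℝ) ≤ (k : ℝ) := Nat.cast_nonneg k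
    have hbS : b * S ≤ 1 := by
      have hbQ : b * Q ≤ ε ^ 2 := by nlinarith
      have hsq : (b * S) ^ 2 ≤ 1 := by
        have hA := mul_le_mul_of_nonneg_left hCS (sq_nonneg b)
        have hBB := mul_le_mul_of_nonneg_left hbQ (mul_nonneg hk0 hb0.le)
        have hC : 0 ≤ (1 - b) * ((k : ℝ) * ε ^ 2) :=
          mul_nonneg (sub_nonneg.2 hb1) (mul_nonneg hk0 (sq_nonneg ε))
        nlinarith [hA, hBB, hC, hkε]
      nlinarith [sq_nonneg (b * S - 1)]
    have hcabs : ∀ j, |c j| ≤ a j + |⟪u j, φ (j + 1)⟫| := by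
      intro j
      have huj : ⟪u j, φ (j + 1)⟫ = a j - c j := by
        simp only [hu, ha, hc, inner_sub_left]
      have : c j = a j - ⟪u j, φ (j + 1)⟫ := by rw [huj]; ring
      rw [this]
      calc |a j - ⟪u j, φ (j + 1)⟫| ≤ |a j| + |⟪u j, φ (j + 1)⟫| := abs_sub _ _
        _ = a j + |⟪u j, φ (j + 1)⟫| := by rw [abs_of_nonneg (haj j)]
    have hsum : ∑ j ∈ Finset.range k, |c j|
        ≤ ∑ j ∈ Finset.range k, a j + S := by
      rw [hS, ← Finset.sum_add_distrib]
      exact Finset.sum_le_sum fun j _ => hcabs j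
    have := mul_le_mul_of_nonneg_left hsum hb0.le
    rw [mul_add] at this
    linarith
  -- conclusion
  intro k hk1 hk2
  have hsa : 0 ≤ ∑ j ∈ Finset.range k, a j := Finset.sum_nonneg fun j _ => haj j
  have hMpos : 0 < B + 1 + b * ∑ j ∈ Finset.range k, a j := by
    have := mul_nonneg hb0.le hsa
    linarith
  have hmem' : (B + 1 + b * ∑ j ∈ Finset.range k, a j)⁻¹ • fε k ∈ A1 D := by
    apply hmem
    have h1 := hcoef k hk2
    have h2 : ∑ j ∈ Finset.range k, b * |c j| = b * ∑ j ∈ Finset.range k, |c j| :=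
      (Finset.mul_sum _ _ _).symm
    linarith
  have hbdd : BddBelow {M : ℝ | 0 < M ∧ M⁻¹ • fε k ∈ A1 D} :=
    ⟨0, fun M hM => hM.1.le⟩
  exact csInf_le hbdd ⟨hMpos, hmem'⟩
end

section
/- Let b ∈ (0,1], h ∈ (0,1), and t, t′ ∈ (0,1] with t′ ≤ t; set β := (1 − b/2)·h·t and β′ := (1 − b/2)·h·t′. Let a, a′, y, B be real numbers with a ≥ 0, a′ ≥ 0, y ≥ 0, B ≥ 1, and suppose a′ ≤ a·(1 − b(2−b)·h·t′·y/B) and b(2−b)·h·t′·y/B ≤ 1. Then (a′)^{1/2}·(B + b·y)^{β′} ≤ a^{1/2}·B^{β}. -/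
/-- One-step multiplicative monotonicity estimate for the WGA iterates: if
`a' ≤ a (1 - b(2-b) h t' y / B)` with `b(2-b) h t' y / B ≤ 1`, `t' ≤ t`, `B ≥ 1`,
then `(a')^{1/2} (B + b y)^{β'} ≤ a^{1/2} B^{β}`, where `β = (1-b/2) h t` and
`β' = (1-b/2) h t'`. -/
theorem stmt_13 (b : ℝ) (hb : b ∈ Set.Ioc (0:ℝ) 1) (h : ℝ) (hh : h ∈ Set.Ioo (0:ℝ) 1)
    (t t' : ℝ) (ht : t ∈ Set.Ioc (0:ℝ) 1) (ht' : t' ∈ Set.Ioc (0:ℝ) 1) (htt' : t' ≤ t)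
    (β β' : ℝ) (hβ : β = (1 - b / 2) * h * t) (hβ' : β' = (1 - b / 2) * h * t')
    (a a' y B : ℝ) (ha : 0 ≤ a) (ha' : 0 ≤ a') (hy : 0 ≤ y) (hB : 1 ≤ B)
    (hstep : a' ≤ a * (1 - b * (2 - b) * h * t' * y / B))
    (hsmall : b * (2 - b) * h * t' * y / B ≤ 1) :
    a' ^ ((1:ℝ)/2) * (B + b * y) ^ β' ≤ a ^ ((1:ℝ)/2) * B ^ β := by
  obtain ⟨hb0, hb1⟩ := hb
  obtain ⟨hh0, hh1⟩ := hh
  obtain ⟨ht0, ht1⟩ := ht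
  obtain ⟨ht'0, ht'1⟩ := ht'
  set c : ℝ := b * (2 - b) * h * t' * y / B with hc
  have hBpos : (0:ℝ) < B := lt_of_lt_of_le one_pos hB
  have hBne : B ≠ 0 := ne_of_gt hBpos
  have hby0 : 0 ≤ b * y := mul_nonneg hb0.le hy
  have hc0 : 0 ≤ c := by
    exact div_nonneg (mul_nonneg (mul_nonneg (mul_nonneg (mul_nonneg hb0.le
      (by linarith)) hh0.le) ht'0.le) hy) hBpos.le
  have hβ'0 : 0 ≤ β' := by
    rw [hβ']
    exact mul_nonneg (mul_nonneg (by linarith) hh0.le) ht'0.le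
  have hβ'β : β' ≤ β := by
    rw [hβ, hβ']
    nlinarith
  -- Step 1: a' ≤ a * exp (-c)
  have hexp1 : 1 - c ≤ Real.exp (-c) := by
    have := Real.add_one_le_exp (-c); linarith
  have key1 : a' ≤ a * Real.exp (-c) := by
    calc a' ≤ a * (1 - c) := hstep
    _ ≤ a * Real.exp (-c) := by
        exact mul_le_mul_of_nonneg_left hexp1 ha
  have hA : a' ^ ((1:ℝ)/2) ≤ a ^ ((1:ℝ)/2) * Real.exp (-(c/2)) := by
    have h1 : a' ^ ((1:ℝ)/2) ≤ (a * Real.exp (-c)) ^ ((1:ℝ)/2) :=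
      Real.rpow_le_rpow ha' key1 (by norm_num)
    have h2 : (a * Real.exp (-c)) ^ ((1:ℝ)/2)
        = a ^ ((1:ℝ)/2) * (Real.exp (-c)) ^ ((1:ℝ)/2) :=
      Real.mul_rpow ha (Real.exp_nonneg _)
    have h3 : (Real.exp (-c)) ^ ((1:ℝ)/2) = Real.exp (-(c/2)) := by
      rw [← Real.exp_mul]; ring_nf
    rw [h2, h3] at h1; exact h1
  -- Step 2: (B + b y)^β' ≤ B^β' * exp (c/2)
  have hx0 : 0 ≤ b * y / B := by positivity
  have hBy : B + b * y = B * (1 + b * y / B) := by field_simp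
  have h1x : (1 + b * y / B) ≤ Real.exp (b * y / B) := by
    have := Real.add_one_le_exp (b * y / B); linarith
  have hpow : (1 + b * y / B) ^ β' ≤ Real.exp (c / 2) := by
    have h1 : (1 + b * y / B) ^ β' ≤ (Real.exp (b * y / B)) ^ β' :=
      Real.rpow_le_rpow (by linarith) h1x hβ'0
    have h2 : (Real.exp (b * y / B)) ^ β' = Real.exp ((b * y / B) * β') := by
      rw [← Real.exp_mul]
    have h3 : (b * y / B) * β' = c / 2 := by
      rw [hβ', hc]; field_simp
    rw [h2, h3] at h1; exact h1
  have hB' : (B + b * y) ^ β' ≤ B ^ β' * Real.exp (c / 2) := by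
    rw [hBy, Real.mul_rpow (le_of_lt hBpos) (by linarith)]
    exact mul_le_mul_of_nonneg_left hpow (Real.rpow_nonneg (le_of_lt hBpos) _)
  -- Combine
  have hcomb : a' ^ ((1:ℝ)/2) * (B + b * y) ^ β'
      ≤ (a ^ ((1:ℝ)/2) * Real.exp (-(c/2))) * (B ^ β' * Real.exp (c / 2)) := by
    apply mul_le_mul hA hB' (Real.rpow_nonneg (by nlinarith) _) (by positivity)
  have heq : (a ^ ((1:ℝ)/2) * Real.exp (-(c/2))) * (B ^ β' * Real.exp (c / 2))
      = a ^ ((1:ℝ)/2) * B ^ β' := by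
    rw [mul_mul_mul_comm, mul_assoc, ← Real.exp_add]
    norm_num
  have hfin : a ^ ((1:ℝ)/2) * B ^ β' ≤ a ^ ((1:ℝ)/2) * B ^ β := by
    apply mul_le_mul_of_nonneg_left (Real.rpow_le_rpow_of_exponent_le hB hβ'β)
      (Real.rpow_nonneg ha _)
  calc a' ^ ((1:ℝ)/2) * (B + b * y) ^ β' ≤ _ := hcomb
  _ = a ^ ((1:ℝ)/2) * B ^ β' := heq
  _ ≤ _ := hfin
end
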